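/- arXiv:math/9309201 — 6 statements merged into one kernel-verified Lean document; each statement's English description precedes it below -/
import Mathlib

section
/- Let Ω, S, a, a₁, …, a_{n−1}, and f be as in the context, with n ≥ 2. Then the (n−1)×(n−1) matrix [S(a_j,a_k)]_{1≤j,k≤n−1} is invertible. -/
open MeasureTheory Complex Set Metric ComplexConjugate Filter

noncomputable section

/-- `Ω` is a bounded domain whose complement has exactly `n` connected components and whose
boundary is the disjoint union of the images of `n` curves `γ j` that are `C^∞`, `1`-periodic,
injective on `[0,1)`, and have nowhere-vanishing derivative. -/
structure IsSmoothMultiplyConnectedDomain (n : ℕ) (Ω : Set ℂ) (γ : Fin n → ℝ → ℂ) : Prop where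
  nonempty : Ω.Nonempty
  isOpen : IsOpen Ω
  isConnected : IsConnected Ω
  isBounded : Bornology.IsBounded Ω
  ncomponents : {C : Set ℂ | ∃ z ∈ Ωᶜ, C = connectedComponentIn Ωᶜ z}.ncard = n
  smooth : ∀ j, ContDiff ℝ (⊤ : ℕ∞) (γ j)
  periodic : ∀ j, Function.Periodic (γ j) 1
  injOn : ∀ j, Set.InjOn (γ j) (Set.Ico (0:ℝ) 1)
  deriv_ne : ∀ j t, deriv (γ j) t ≠ 0
  boundary_eq : frontier Ω = ⋃ j, Set.range (γ j)
  disjointImages : ∀ j k, j ≠ k → Disjoint (Set.range (γ j)) (Set.range (γ k))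

/-- `S` is a Szegő kernel for `Ω`: holomorphic in its first variable, hermitian, and
reproducing holomorphic functions from boundary integrals against arc length measure
(one-dimensional Hausdorff measure restricted to the boundary). -/
structure IsSzegoKernel (Ω : Set ℂ) (S : ℂ → ℂ → ℂ) : Prop where
  continuousOn : ∀ a ∈ Ω, ContinuousOn (fun z => S z a) (closure Ω)
  holo : ∀ a ∈ Ω, DifferentiableOn ℂ (fun z => S z a) Ω
  hermitian : ∀ z ∈ Ω, ∀ w ∈ Ω, S z w = conj (S w z)
  reproducing : ∀ h : ℂ → ℂ, ContinuousOn h (closure Ω) → DifferentiableOn ℂ h Ω →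
    ∀ a ∈ Ω, h a = ∫ ζ in frontier Ω, h ζ * conj (S ζ a) ∂μH[1]

/-- The matrix `[S (aa j) (aa k)]` built from a kernel `S` and points `aa`. -/
def szegoMatrix {m : ℕ} (S : ℂ → ℂ → ℂ) (aa : Fin m → ℂ) : Matrix (Fin m) (Fin m) ℂ :=
  Matrix.of fun j k => S (aa j) (aa k)

/-- A continuous function on a compact measurable set of finite `μH[1]` measure is
integrable on it. -/
lemma integrableOn_of_cont_bdd {E : Type*} [NormedAddCommGroup E] {f : ℂ → E} {s : Set ℂ}
    (hs : IsCompact s) (hsm : MeasurableSet s) (hfin : μH[1] s ≠ ⊤)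
    (hf : ContinuousOn f s) : IntegrableOn f s μH[1] := by
  obtain ⟨C, hC⟩ := hs.exists_bound_of_continuousOn hf
  refine ⟨hf.aestronglyMeasurable hsm, ?_⟩
  exact HasFiniteIntegral.restrict_of_bounded (C := C) hfin.lt_top
    ((ae_restrict_iff' hsm).2 (Filter.Eventually.of_forall hC))

/-- The range of a smooth `1`-periodic curve has finite length. -/
lemma hausdorff_range_lt_top (γ : ℝ → ℂ) (h : ContDiff ℝ (⊤ : ℕ∞) γ) (hp : Function.Periodic γ 1) :
    μH[1] (Set.range γ) < ⊤ := by
  have h1 : ContDiff ℝ 1 γ := h.of_le (by simp)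
  have hder : Continuous (fderiv ℝ γ) := h1.continuous_fderiv one_ne_zero
  obtain ⟨C, hC⟩ := isCompact_Icc.exists_bound_of_continuousOn (s := Icc (0:ℝ) 1)
    hder.continuousOn
  have hlip : LipschitzOnWith C.toNNReal γ (Icc (0:ℝ) 1) :=
    (convex_Icc 0 1).lipschitzOnWith_of_nnnorm_fderiv_le
      (fun x _ => h1.differentiable one_ne_zero x)
      (fun x hx => by
        rw [← norm_toNNReal]
        exact Real.toNNReal_mono (hC x hx))
  have himg : γ '' Icc (0:ℝ) (0+1) = Set.range γ := hp.image_Icc one_pos 0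
  have hle := hlip.hausdorffMeasure_image_le (d := 1) zero_le_one
  rw [zero_add] at himg
  rw [← himg]
  refine lt_of_le_of_lt hle ?_
  rw [MeasureTheory.hausdorffMeasure_real, Real.volume_Icc]
  exact ENNReal.mul_lt_top (by simp) (by simp)

/-- the matrix `[S(a_j, a_k)]` built from the zeroes of `S(·,a)` is invertible. -/
theorem szego_matrix_invertible
    (n : ℕ) (hn : 2 ≤ n) (Ω : Set ℂ) (γ : Fin n → ℝ → ℂ)
    (hΩ : IsSmoothMultiplyConnectedDomain n Ω γ)
    (S : ℂ → ℂ → ℂ) (hS : IsSzegoKernel Ω S)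
    (a : ℂ) (ha : a ∈ Ω) (aa : Fin (n-1) → ℂ) (haa : ∀ i, aa i ∈ Ω)
    (hainj : Function.Injective aa) (hane : ∀ i, aa i ≠ a)
    (hzeros : ∀ i, S (aa i) a = 0)
    (f : ℂ → ℂ) (hfc : ContinuousOn f (closure Ω)) (hfh : DifferentiableOn ℂ f Ω)
    (hfb : ∀ ζ ∈ frontier Ω, ‖f ζ‖ = 1)
    (hfz : ∀ z ∈ Ω, (f z = 0 ↔ z = a ∨ ∃ i, z = aa i))
    (hfsa : deriv f a ≠ 0) (hfsi : ∀ i, deriv f (aa i) ≠ 0) :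
    IsUnit (szegoMatrix S aa) := by
  by_contra hM
  -- extract a nonzero null vector
  have hdet : (szegoMatrix S aa).det = 0 := by
    by_contra h
    exact hM ((Matrix.isUnit_iff_isUnit_det _).2 (isUnit_iff_ne_zero.2 h))
  obtain ⟨c, hc0, hc⟩ := (Matrix.exists_mulVec_eq_zero_iff).2 hdet
  -- basic facts about the boundary
  set F := frontier Ω with hFdef
  have hFm : MeasurableSet F := isClosed_frontier.measurableSet
  have hFc : IsCompact F :=
    isCompact_of_isClosed_isBounded isClosed_frontier
      (hΩ.isBounded.closure.subset frontier_subset_closure)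
  have hfin : μH[1] F ≠ ⊤ := by
    rw [hFdef, hΩ.boundary_eq]
    refine ne_top_of_le_ne_top ?_ (measure_iUnion_le _)
    rw [tsum_fintype]
    exact (ENNReal.sum_lt_top.2 fun j _ =>
      hausdorff_range_lt_top (γ j) (hΩ.smooth j) (hΩ.periodic j)).ne
  -- the integrability workhorse
  have hint : ∀ (u v : ℂ → ℂ), ContinuousOn u (closure Ω) → ContinuousOn v (closure Ω) →
      IntegrableOn (fun ζ => u ζ * conj (v ζ)) F μH[1] := by
    intro u v hu hv
    refine integrableOn_of_cont_bdd hFc hFm hfin ?_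
    exact ((hu.mul (continuous_star.comp_continuousOn hv)).mono frontier_subset_closure)
  -- the combination h = ∑ c k • S(·, aa k)
  set h : ℂ → ℂ := fun z => ∑ k, c k * S z (aa k) with hhdef
  have hcont : ContinuousOn h (closure Ω) :=
    continuousOn_finset_sum _ fun k _ =>
      continuousOn_const.mul (hS.continuousOn (aa k) (haa k))
  have hdiff : DifferentiableOn ℂ h Ω := by
    apply DifferentiableOn.fun_sum
    intro k _
    exact (differentiableOn_const _).mul (hS.holo (aa k) (haa k))
  have hval : ∀ j, h (aa j) = 0 := by
    intro j
    have := congrFun hc j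
    simp only [Matrix.mulVec, dotProduct, szegoMatrix, Matrix.of_apply,
      Pi.zero_apply] at this
    rw [hhdef]
    simp only
    rw [← this]
    exact Finset.sum_congr rfl fun k _ => mul_comm _ _
  have hrepr : ∀ j, (∫ ζ in F, h ζ * conj (S ζ (aa j)) ∂μH[1]) = 0 := fun j => by
    rw [← hS.reproducing h hcont hdiff (aa j) (haa j)]; exact hval j
  -- ∫ |h|² = 0 on the boundary
  have hsum : (∫ ζ in F, h ζ * conj (h ζ) ∂μH[1]) = 0 := by
    have e1 : ∀ ζ, h ζ * conj (h ζ)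
        = ∑ k, conj (c k) * (h ζ * conj (S ζ (aa k))) := by
      intro ζ
      have : conj (h ζ) = ∑ k, conj (c k) * conj (S ζ (aa k)) := by
        rw [hhdef]; simp [map_sum]
      rw [this, Finset.mul_sum]
      exact Finset.sum_congr rfl fun k _ => by ring
    calc (∫ ζ in F, h ζ * conj (h ζ) ∂μH[1])
        = ∫ ζ in F, ∑ k, conj (c k) * (h ζ * conj (S ζ (aa k))) ∂μH[1] :=
          MeasureTheory.integral_congr_ae (Filter.Eventually.of_forall e1)
      _ = ∑ k, ∫ ζ in F, conj (c k) * (h ζ * conj (S ζ (aa k))) ∂μH[1] :=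
          MeasureTheory.integral_finset_sum _ fun k _ =>
            ((hint h (fun z => S z (aa k)) hcont (hS.continuousOn (aa k) (haa k))).const_mul _)
      _ = 0 := Finset.sum_eq_zero fun k _ => by
          rw [MeasureTheory.integral_const_mul, hrepr k, mul_zero]
  have hnormSqInt : IntegrableOn (fun ζ => Complex.normSq (h ζ)) F μH[1] :=
    integrableOn_of_cont_bdd hFc hFm hfin
      (Complex.continuous_normSq.comp_continuousOn (hcont.mono frontier_subset_closure))
  have hre : (∫ ζ in F, Complex.normSq (h ζ) ∂μH[1]) = 0 := by
    have e2 : (∫ ζ in F, ((Complex.normSq (h ζ) : ℝ) : ℂ) ∂μH[1]) = 0 := by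
      rw [← hsum]
      exact MeasureTheory.integral_congr_ae
        (Filter.Eventually.of_forall fun ζ => (Complex.mul_conj (h ζ)).symm)
    have h1 : (∫ ζ in F, ((Complex.normSq (h ζ) : ℝ) : ℂ) ∂μH[1])
        = ((∫ ζ in F, Complex.normSq (h ζ) ∂μH[1] : ℝ) : ℂ) := integral_ofReal (𝕜 := ℂ)
    rw [h1] at e2
    exact_mod_cast e2
  have haeNS : (fun ζ => Complex.normSq (h ζ)) =ᵐ[μH[1].restrict F] 0 :=
    (MeasureTheory.integral_eq_zero_iff_of_nonneg
      (fun ζ => Complex.normSq_nonneg _) hnormSqInt).1 hre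
  have haeh : h =ᵐ[μH[1].restrict F] 0 := by
    filter_upwards [haeNS] with ζ hζ
    simpa [Complex.normSq_eq_zero] using hζ
  -- use Lagrange interpolation to conclude c = 0
  have hczero : c = 0 := by
    funext k0
    classical
    set p : Polynomial ℂ := Lagrange.basis Finset.univ aa k0 with hpdef
    set u : ℂ → ℂ := fun z => p.eval z with hudef
    have hucont : Continuous u := by
      rw [hudef]; exact p.continuous
    have hudiff : Differentiable ℂ u := by
      rw [hudef]; exact p.differentiable
    have huval : ∀ k, u (aa k) = if k = k0 then 1 else 0 := by
      intro k
      by_cases hk : k = k0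
      · subst hk
        simp only [hudef, hpdef, if_pos rfl]
        exact Lagrange.eval_basis_self (hainj.injOn) (Finset.mem_univ _)
      · simp only [hudef, hpdef, if_neg hk]
        exact Lagrange.eval_basis_of_ne (Ne.symm hk) (Finset.mem_univ _)
    have hrep : ∀ k, u (aa k) = ∫ ζ in F, u ζ * conj (S ζ (aa k)) ∂μH[1] := fun k =>
      hS.reproducing u hucont.continuousOn hudiff.differentiableOn (aa k) (haa k)
    have e1 : ∀ ζ, u ζ * conj (h ζ)
        = ∑ k, conj (c k) * (u ζ * conj (S ζ (aa k))) := by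
      intro ζ
      have : conj (h ζ) = ∑ k, conj (c k) * conj (S ζ (aa k)) := by
        rw [hhdef]; simp [map_sum]
      rw [this, Finset.mul_sum]
      exact Finset.sum_congr rfl fun k _ => by ring
    have key : (∫ ζ in F, u ζ * conj (h ζ) ∂μH[1]) = conj (c k0) := by
      calc (∫ ζ in F, u ζ * conj (h ζ) ∂μH[1])
          = ∫ ζ in F, ∑ k, conj (c k) * (u ζ * conj (S ζ (aa k))) ∂μH[1] :=
            MeasureTheory.integral_congr_ae (Filter.Eventually.of_forall e1)
        _ = ∑ k, ∫ ζ in F, conj (c k) * (u ζ * conj (S ζ (aa k))) ∂μH[1] :=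
            MeasureTheory.integral_finset_sum _ fun k _ =>
              ((hint u (fun z => S z (aa k)) hucont.continuousOn
                (hS.continuousOn (aa k) (haa k))).const_mul _)
        _ = ∑ k, conj (c k) * (if k = k0 then 1 else 0) :=
            Finset.sum_congr rfl fun k _ => by
              rw [MeasureTheory.integral_const_mul, ← hrep k, huval k]
        _ = conj (c k0) := by simp
    have hzero : (∫ ζ in F, u ζ * conj (h ζ) ∂μH[1]) = 0 := by
      have hae0 : (fun ζ => u ζ * conj (h ζ)) =ᵐ[μH[1].restrict F] 0 := by
        filter_upwards [haeh] with ζ hζ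
        simp [hζ]
      exact MeasureTheory.integral_eq_zero_of_ae hae0
    have : conj (c k0) = 0 := key.symm.trans hzero
    simpa using this
  exact hc0 hczero
end
end

section
/- Let Ω, S, a₀ = a, a₁, …, a_{n−1}, and f be as in the context, and for 0 ≤ i ≤ n−1 and integers k ≥ 0 define h_{ik} : ∂Ω → ℂ by h_{ik}(ζ) = S(ζ,a_i)·f(ζ)^k. Then for all 0 ≤ i, j ≤ n−1 and all integers k, m ≥ 0: ∫_{∂Ω} h_{ik}(ζ)·conj(h_{jm}(ζ)) dσ(ζ) equals 0 if k ≠ m, and equals S(a_j,a_i) if k = m. -/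
open MeasureTheory Complex Set Metric ComplexConjugate Filter

noncomputable section

/-- orthogonality relations for the functions `h_{ik}(ζ) = S(ζ,a_i) f(ζ)^k`. -/
theorem szego_basis_orthogonality
    (n : ℕ) (hn : 0 < n) (Ω : Set ℂ) (γ : Fin n → ℝ → ℂ)
    (hΩ : IsSmoothMultiplyConnectedDomain n Ω γ)
    (S : ℂ → ℂ → ℂ) (hS : IsSzegoKernel Ω S)
    (A : Fin n → ℂ) (hA : ∀ i, A i ∈ Ω) (hAinj : Function.Injective A)
    (hzeros : ∀ i : Fin n, i ≠ ⟨0, hn⟩ → S (A i) (A ⟨0, hn⟩) = 0)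
    (f : ℂ → ℂ) (hfc : ContinuousOn f (closure Ω)) (hfh : DifferentiableOn ℂ f Ω)
    (hfb : ∀ ζ ∈ frontier Ω, ‖f ζ‖ = 1)
    (hfz : ∀ j, f (A j) = 0) :
    ∀ (i j : Fin n) (k m : ℕ),
      ∫ ζ in frontier Ω, (S ζ (A i) * f ζ ^ k) * conj (S ζ (A j) * f ζ ^ m) ∂μH[1] =
        if k = m then S (A j) (A i) else 0 := by
  have key : ∀ (i j : Fin n) (d : ℕ),
      ∫ ζ in frontier Ω, (S ζ (A i) * f ζ ^ d) * conj (S ζ (A j)) ∂μH[1]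
        = S (A j) (A i) * f (A j) ^ d := by
    intro i j d
    exact (hS.reproducing (fun ζ => S ζ (A i) * f ζ ^ d)
      ((hS.continuousOn _ (hA i)).mul (hfc.pow d))
      ((hS.holo _ (hA i)).mul (hfh.pow d)) (A j) (hA j)).symm
  have hfront : MeasurableSet (frontier Ω) := isClosed_frontier.measurableSet
  have main : ∀ (i j : Fin n) (k m : ℕ), m ≤ k →
      ∫ ζ in frontier Ω, (S ζ (A i) * f ζ ^ k) * conj (S ζ (A j) * f ζ ^ m) ∂μH[1]
        = S (A j) (A i) * f (A j) ^ (k - m) := by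
    intro i j k m hmk
    rw [← key i j (k - m)]
    apply setIntegral_congr_fun hfront
    intro ζ hζ
    have h1 : f ζ * conj (f ζ) = 1 := by
      rw [Complex.mul_conj]
      norm_cast
      rw [Complex.normSq_eq_norm_sq, hfb ζ hζ]; norm_num
    have h1' : f ζ ^ m * conj (f ζ) ^ m = 1 := by
      rw [← mul_pow, h1, one_pow]
    have h2 : f ζ ^ k = f ζ ^ (k - m) * f ζ ^ m := by
      rw [← pow_add, Nat.sub_add_cancel hmk]
    simp only [map_mul, map_pow, h2]
    linear_combination (S ζ (A i) * f ζ ^ (k - m) * conj (S ζ (A j))) * h1'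
  intro i j k m
  rcases le_or_gt m k with h | h
  · rw [main i j k m h]
    rcases eq_or_ne k m with he | he
    · simp [he]
    · have hpos : 0 < k - m := Nat.sub_pos_of_lt (lt_of_le_of_ne h (Ne.symm he))
      rw [if_neg he, hfz j, zero_pow hpos.ne', mul_zero]
  · have conjeq : ∫ ζ in frontier Ω, (S ζ (A i) * f ζ ^ k) * conj (S ζ (A j) * f ζ ^ m) ∂μH[1]
        = conj (∫ ζ in frontier Ω, (S ζ (A j) * f ζ ^ m) * conj (S ζ (A i) * f ζ ^ k) ∂μH[1]) := by
      rw [← integral_conj]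
      congr 1
      funext ζ
      simp only [map_mul, Complex.conj_conj]
      ring
    rw [conjeq, main j i m k h.le, hfz i, zero_pow (Nat.sub_pos_of_lt h).ne',
      mul_zero, map_zero, if_neg h.ne]
end
end

section
/- Let Ω, S, a₀ = a, a₁, …, a_{n−1}, and f be as in the context, and for 0 ≤ i ≤ n−1 and integers k ≥ 0 define h_{ik} : ∂Ω → ℂ by h_{ik}(ζ) = S(ζ,a_i)·f(ζ)^k. If g : closure(Ω) → ℂ is continuous on closure(Ω), holomorphic on Ω, and satisfies ∫_{∂Ω} g(ζ)·conj(h_{ik}(ζ)) dσ(ζ) = 0 for all 0 ≤ i ≤ n−1 and all integers k ≥ 0, then g is identically zero on Ω. -/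
open MeasureTheory Complex Set Metric ComplexConjugate Filter

noncomputable section

open Topology

/-- Auxiliary division operation: `quotAux f u = u / f` with the removable singularity at
zeros of `f` filled in by L'Hôpital's value `deriv u / deriv f`. -/
def quotAux (f u : ℂ → ℂ) : ℂ → ℂ := fun z =>
  if f z = 0 then deriv u z / deriv f z else u z / f z

lemma analyticAt_dslope_self {u : ℂ → ℂ} {a : ℂ} (h : AnalyticAt ℂ u a) :
    AnalyticAt ℂ (dslope u a) a := by
  obtain ⟨p, hp⟩ := h
  exact hp.has_fpower_series_dslope_fslope.analyticAt

/-- the functions `h_{ik}(ζ) = S(ζ,a_i) f(ζ)^k` span a dense subspace: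
a holomorphic function orthogonal to all of them vanishes identically. -/
theorem szego_basis_density
    (n : ℕ) (hn : 0 < n) (Ω : Set ℂ) (γ : Fin n → ℝ → ℂ)
    (hΩ : IsSmoothMultiplyConnectedDomain n Ω γ)
    (S : ℂ → ℂ → ℂ) (hS : IsSzegoKernel Ω S)
    (A : Fin n → ℂ) (hA : ∀ i, A i ∈ Ω) (hAinj : Function.Injective A)
    (hzeros : ∀ i : Fin n, i ≠ ⟨0, hn⟩ → S (A i) (A ⟨0, hn⟩) = 0)
    (f : ℂ → ℂ) (hfc : ContinuousOn f (closure Ω)) (hfh : DifferentiableOn ℂ f Ω)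
    (hfb : ∀ ζ ∈ frontier Ω, ‖f ζ‖ = 1)
    (hfz : ∀ z ∈ Ω, (f z = 0 ↔ ∃ j, z = A j))
    (hfs : ∀ j, deriv f (A j) ≠ 0)
    (g : ℂ → ℂ) (hgc : ContinuousOn g (closure Ω)) (hgh : DifferentiableOn ℂ g Ω)
    (horth : ∀ (i : Fin n) (k : ℕ),
      ∫ ζ in frontier Ω, g ζ * conj (S ζ (A i) * f ζ ^ k) ∂μH[1] = 0) :
    ∀ z ∈ Ω, g z = 0 := by
  have hΩopen : IsOpen Ω := hΩ.isOpen
  have hmeas : MeasurableSet (frontier Ω) := isClosed_frontier.measurableSet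
  -- basic facts about f on the boundary
  have hfront_ne : ∀ ζ ∈ frontier Ω, f ζ ≠ 0 := by
    intro ζ hζ h0
    have := hfb ζ hζ
    rw [h0] at this
    simp at this
  have hconjf : ∀ ζ ∈ frontier Ω, conj (f ζ) = (f ζ)⁻¹ := by
    intro ζ hζ
    have h1 : f ζ * conj (f ζ) = 1 := by
      rw [Complex.mul_conj]
      norm_cast
      rw [Complex.normSq_eq_norm_sq, hfb ζ hζ]
      norm_num
    exact (inv_eq_of_mul_eq_one_right h1).symm
  -- membership in the closure
  have hfrmem : ∀ z ∈ closure Ω, z ∉ Ω → z ∈ frontier Ω := by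
    intro z hz hz'
    rw [frontier, hΩopen.interior_eq]
    exact ⟨hz, hz'⟩
  have hfne_int : ∀ z ∈ Ω, z ∉ Set.range A → f z ≠ 0 := by
    intro z hz hzA h0
    obtain ⟨j, rfl⟩ := (hfz z hz).mp h0
    exact hzA ⟨j, rfl⟩
  have hfA : ∀ j, f (A j) = 0 := fun j => (hfz _ (hA j)).mpr ⟨j, rfl⟩
  -- the open set Ω minus the zeros of f
  have hWopen : IsOpen (Ω \ Set.range A) :=
    hΩopen.sdiff (Set.finite_range A).isClosed
  -- KEY LEMMA: dividing by f
  have key : ∀ u : ℂ → ℂ, ContinuousOn u (closure Ω) → DifferentiableOn ℂ u Ω →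
      (∀ j, u (A j) = 0) →
      DifferentiableOn ℂ (quotAux f u) Ω ∧ ContinuousOn (quotAux f u) (closure Ω) ∧
      (∀ z ∈ closure Ω, f z * quotAux f u z = u z) := by
    intro u huc huh hu0
    have hdiff : DifferentiableOn ℂ (quotAux f u) Ω := by
      intro z hz
      by_cases h0 : f z = 0
      · -- removable singularity at a zero A j of f
        obtain ⟨j, rfl⟩ := (hfz z hz).mp h0
        have hΩnj : Ω ∈ 𝓝 (A j) := hΩopen.mem_nhds (hA j)
        have huA : AnalyticAt ℂ u (A j) := huh.analyticAt hΩnj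
        have hfAj : AnalyticAt ℂ f (A j) := hfh.analyticAt hΩnj
        have hdu : AnalyticAt ℂ (dslope u (A j)) (A j) := analyticAt_dslope_self huA
        have hdf : AnalyticAt ℂ (dslope f (A j)) (A j) := analyticAt_dslope_self hfAj
        have hdf0 : dslope f (A j) (A j) ≠ 0 := by
          rw [dslope_same]; exact hfs j
        have hne_ev : ∀ᶠ w in 𝓝 (A j), dslope f (A j) w ≠ 0 :=
          hdf.continuousAt.eventually_ne hdf0
        have hcompl : ∀ᶠ w in 𝓝 (A j), w ∉ Set.range A \ {A j} := by
          have : IsOpen (Set.range A \ {A j})ᶜ :=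
        ((Set.finite_range A).diff).isClosed.isOpen_compl
          exact this.mem_nhds (by simp)
        have hV : ∀ᶠ w in 𝓝 (A j),
            DifferentiableAt ℂ (dslope u (A j)) w ∧ DifferentiableAt ℂ (dslope f (A j)) w ∧
            dslope f (A j) w ≠ 0 ∧ w ∈ Ω ∧ w ∉ Set.range A \ {A j} := by
          filter_upwards [hdu.eventually_analyticAt, hdf.eventually_analyticAt, hne_ev,
            hΩnj, hcompl] with w h1 h2 h3 h4 h5
          exact ⟨h1.differentiableAt, h2.differentiableAt, h3, h4, h5⟩
        set V : Set ℂ := {w | DifferentiableAt ℂ (dslope u (A j)) w ∧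
            DifferentiableAt ℂ (dslope f (A j)) w ∧
            dslope f (A j) w ≠ 0 ∧ w ∈ Ω ∧ w ∉ Set.range A \ {A j}} with hVdef
        have hVnhds : V ∈ 𝓝 (A j) := hV
        have hdq : DifferentiableOn ℂ
            (fun w => dslope u (A j) w / dslope f (A j) w) V := fun w hw =>
          (hw.1.differentiableWithinAt).div (hw.2.1.differentiableWithinAt) hw.2.2.1
        have heqV : ∀ w ∈ V, quotAux f u w = dslope u (A j) w / dslope f (A j) w := by
          intro w hw
          rcases eq_or_ne w (A j) with rfl | hwne
          · rw [quotAux, if_pos h0, dslope_same, dslope_same]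
          · have hwA : w ∉ Set.range A := by
              intro hmem
              exact hw.2.2.2.2 ⟨hmem, hwne⟩
            have hfw : f w ≠ 0 := hfne_int w hw.2.2.2.1 hwA
            rw [quotAux, if_neg hfw, dslope_of_ne _ hwne, dslope_of_ne _ hwne,
              slope_def_field, slope_def_field, hu0 j, hfA j]
            have hwa0 : w - A j ≠ 0 := sub_ne_zero.mpr hwne
            rw [sub_zero, sub_zero]
            field_simp
        have : DifferentiableOn ℂ (quotAux f u) V := hdq.congr heqV
        exact ((this _ (mem_of_mem_nhds hVnhds)).differentiableAt hVnhds).differentiableWithinAt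
      · -- away from the zeros of f
        have hzW : z ∈ Ω \ Set.range A := by
          refine ⟨hz, ?_⟩
          rintro ⟨j, rfl⟩
          exact h0 (hfA j)
        have hdq : DifferentiableOn ℂ (fun w => u w / f w) (Ω \ Set.range A) :=
          (huh.mono diff_subset).div (hfh.mono diff_subset)
            (fun w hw => hfne_int w hw.1 hw.2)
        have heqW : ∀ w ∈ Ω \ Set.range A, quotAux f u w = u w / f w := by
          intro w hw
          rw [quotAux, if_neg (hfne_int w hw.1 hw.2)]
        have : DifferentiableOn ℂ (quotAux f u) (Ω \ Set.range A) := hdq.congr heqW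
        exact ((this z hzW).differentiableAt (hWopen.mem_nhds hzW)).differentiableWithinAt
    refine ⟨hdiff, ?_, ?_⟩
    · -- continuity on the closure
      intro z hz
      by_cases h0 : f z = 0
      · have hzΩ : z ∈ Ω := by
          by_contra h'
          exact hfront_ne z (hfrmem z hz h') h0
        exact (((hdiff z hzΩ).differentiableAt
          (hΩopen.mem_nhds hzΩ)).continuousAt).continuousWithinAt
      · have hfev : ∀ᶠ w in 𝓝[closure Ω] z, f w ≠ 0 :=
          Filter.Tendsto.eventually_ne (hfc z hz) h0
        have hcw : ContinuousWithinAt (fun w => u w / f w) (closure Ω) z :=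
          (huc z hz).div (hfc z hz) h0
        refine hcw.congr_of_eventuallyEq ?_ ?_
        · filter_upwards [hfev] with w hw
          rw [quotAux, if_neg hw]
        · rw [quotAux, if_neg h0]
    · -- f * quotAux f u = u
      intro z hz
      by_cases h0 : f z = 0
      · have hzΩ : z ∈ Ω := by
          by_contra h'
          exact hfront_ne z (hfrmem z hz h') h0
        obtain ⟨j, rfl⟩ := (hfz z hzΩ).mp h0
        rw [h0, hu0 j, zero_mul]
      · rw [quotAux, if_neg h0, mul_div_cancel₀ _ h0]
  -- the sequence of iterated quotients
  have main : ∀ m : ℕ, ContinuousOn ((quotAux f)^[m] g) (closure Ω) ∧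
      DifferentiableOn ℂ ((quotAux f)^[m] g) Ω ∧
      ∀ (i : Fin n) (k : ℕ),
        ∫ ζ in frontier Ω, ((quotAux f)^[m] g) ζ * conj (S ζ (A i) * f ζ ^ k) ∂μH[1] = 0 := by
    intro m
    induction m with
    | zero => exact ⟨hgc, hgh, horth⟩
    | succ m ih =>
      obtain ⟨hc, hd, ho⟩ := ih
      have hz0 : ∀ j, ((quotAux f)^[m] g) (A j) = 0 := by
        intro j
        rw [hS.reproducing _ hc hd (A j) (hA j)]
        have := ho j 0
        simpa using this
      obtain ⟨hd', hc', _⟩ := key _ hc hd hz0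
      rw [Function.iterate_succ_apply']
      refine ⟨hc', hd', ?_⟩
      intro i k
      have hptwise : ∀ ζ ∈ frontier Ω,
          quotAux f ((quotAux f)^[m] g) ζ * conj (S ζ (A i) * f ζ ^ k)
            = ((quotAux f)^[m] g) ζ * conj (S ζ (A i) * f ζ ^ (k + 1)) := by
        intro ζ hζ
        have hne := hfront_ne ζ hζ
        have hq : quotAux f ((quotAux f)^[m] g) ζ = ((quotAux f)^[m] g) ζ / f ζ := by
          rw [quotAux, if_neg hne]
        rw [hq, map_mul, map_mul, map_pow, map_pow, hconjf ζ hζ, pow_succ,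
          div_eq_mul_inv]
        ring
      rw [MeasureTheory.setIntegral_congr_fun hmeas hptwise]
      exact ho i (k + 1)
  -- zeros of the iterates
  have hz0 : ∀ m j, ((quotAux f)^[m] g) (A j) = 0 := by
    intro m j
    obtain ⟨hc, hd, ho⟩ := main m
    rw [hS.reproducing _ hc hd (A j) (hA j)]
    have := ho j 0
    simpa using this
  -- the representation g = f^m * g_m on Ω
  have hrep : ∀ m : ℕ, ∀ z ∈ Ω, g z = f z ^ m * ((quotAux f)^[m] g) z := by
    intro m
    induction m with
    | zero => intro z hz; simp
    | succ m ih =>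
      intro z hz
      obtain ⟨hc, hd, _⟩ := main m
      have heq := (key _ hc hd (hz0 m)).2.2 z (subset_closure hz)
      rw [Function.iterate_succ_apply', pow_succ]
      calc g z = f z ^ m * ((quotAux f)^[m] g) z := ih z hz
        _ = f z ^ m * (f z * quotAux f ((quotAux f)^[m] g) z) := by rw [heq]
        _ = f z ^ m * f z * quotAux f ((quotAux f)^[m] g) z := by ring
  -- identity theorem
  set a : ℂ := A ⟨0, hn⟩ with ha
  have haΩ : a ∈ Ω := hA _
  have hΩa : Ω ∈ 𝓝 a := hΩopen.mem_nhds haΩ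
  have hga : AnalyticAt ℂ g a := hgh.analyticAt hΩa
  have htop : analyticOrderAt g a = ⊤ := by
    by_contra htop
    obtain ⟨d, hd⟩ := WithTop.ne_top_iff_exists.mp htop
    obtain ⟨h, hha, hh0, hev⟩ := (hga.analyticOrderAt_eq_natCast (n := d)).mp hd.symm
    -- auxiliary continuous function ψ
    have hGd : DifferentiableOn ℂ ((quotAux f)^[d + 1] g) Ω := (main (d + 1)).2.1
    have hfa : AnalyticAt ℂ f a := hfh.analyticAt hΩa
    have hdsf : AnalyticAt ℂ (dslope f a) a := analyticAt_dslope_self hfa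
    set ψ : ℂ → ℂ := fun z => dslope f a z ^ (d + 1) * ((quotAux f)^[d + 1] g) z with hψ
    have hψc : ContinuousAt ψ a :=
      (hdsf.continuousAt.pow (d + 1)).mul ((hGd.analyticAt hΩa).continuousAt)
    have hpunct : ∀ᶠ z in 𝓝[≠] a, h z = (z - a) * ψ z := by
      filter_upwards [nhdsWithin_le_nhds hev, nhdsWithin_le_nhds hΩa,
        self_mem_nhdsWithin] with z h1 h2 h3
      have hzne : z ≠ a := h3
      have hza : z - a ≠ 0 := sub_ne_zero.mpr hzne
      have hfz' : f z = (z - a) * dslope f a z := by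
        rw [dslope_of_ne _ hzne, slope_def_field, hfA]
        field_simp
        rw [sub_zero]
      have hkey : (z - a) ^ d * h z = (z - a) ^ d * ((z - a) * ψ z) := by
        have hg1 : g z = (z - a) ^ d * h z := by
          rw [h1, smul_eq_mul]
        have hg2 : g z = f z ^ (d + 1) * ((quotAux f)^[d + 1] g) z := hrep (d + 1) z h2
        rw [← hg1, hg2, hfz', hψ, mul_pow]
        ring
      exact mul_left_cancel₀ (pow_ne_zero d hza) hkey
    have hlim1 : Tendsto h (𝓝[≠] a) (𝓝 (h a)) :=
      hha.continuousAt.tendsto.mono_left nhdsWithin_le_nhds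
    have hlim2 : Tendsto (fun z => (z - a) * ψ z) (𝓝[≠] a) (𝓝 0) := by
      have : Tendsto (fun z => (z - a) * ψ z) (𝓝 a) (𝓝 ((a - a) * ψ a)) :=
        ((continuousAt_id.sub continuousAt_const).mul hψc).tendsto
      simpa using this.mono_left nhdsWithin_le_nhds
    have : h a = 0 := tendsto_nhds_unique (hlim1.congr' hpunct) hlim2
    exact hh0 this
  have hev0 : g =ᶠ[𝓝 a] 0 := analyticOrderAt_eq_top.mp htop
  have := (hgh.analyticOnNhd hΩopen).eqOn_zero_of_preconnected_of_eventuallyEq_zero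
    hΩ.isConnected.isPreconnected haΩ hev0
  intro z hz
  exact this hz
end
end

section
/- Let U₁ ⊆ ℝⁿ and U₂ ⊆ ℝᵐ be nonempty open connected sets and let R : U₁ × U₂ → ℝ be real analytic. Suppose that for each fixed y ∈ U₂ there exist real polynomials p, q in n variables with q ≠ 0 such that q(x)·R(x,y) = p(x) for all x ∈ U₁, and that for each fixed x ∈ U₁ there exist real polynomials p̃, q̃ in m variables with q̃ ≠ 0 such that q̃(y)·R(x,y) = p̃(y) for all y ∈ U₂. Then R is rational jointly: there exist real polynomials P, Q in n + m variables with Q ≠ 0 such that Q(x,y)·R(x,y) = P(x,y) for all (x,y) ∈ U₁ × U₂. -/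
open MeasureTheory Complex Set Metric ComplexConjugate Filter

noncomputable section



/-- A real multivariate polynomial vanishing on a nonempty open set is zero. -/
theorem mvpoly_eq_zero_of_eval_zero_on_open {k : ℕ} (g : MvPolynomial (Fin k) ℝ)
    {V : Set (Fin k → ℝ)} (hV : IsOpen V) (hne : V.Nonempty)
    (h : ∀ v ∈ V, MvPolynomial.eval v g = 0) : g = 0 := by
  have hA : AnalyticOnNhd ℝ (fun x : Fin k → ℝ => MvPolynomial.eval x g) Set.univ := by
    simpa using AnalyticOnNhd.eval_continuousLinearMap
      (ContinuousLinearMap.id ℝ (Fin k → ℝ)) g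
  obtain ⟨v₀, hv₀⟩ := hne
  have hz : (fun x : Fin k → ℝ => MvPolynomial.eval x g) =ᶠ[nhds v₀] 0 := by
    filter_upwards [hV.mem_nhds hv₀] with x hx using h x hx
  have := hA.eqOn_zero_of_preconnected_of_eventuallyEq_zero
    isPreconnected_univ (Set.mem_univ v₀) hz
  apply MvPolynomial.funext
  intro x
  simpa using this (Set.mem_univ x)

/-- monomial with exponents bounded by d -/
def bmono {n d : ℕ} (e : Fin n → Fin (d+1)) (x : Fin n → ℝ) : ℝ := ∏ i, x i ^ (e i : ℕ)

def toFinsuppE {n d : ℕ} (e : Fin n → Fin (d+1)) : Fin n →₀ ℕ :=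
  Finsupp.equivFunOnFinite.symm (fun i => (e i : ℕ))

theorem toFinsuppE_apply {n d : ℕ} (e : Fin n → Fin (d+1)) (i : Fin n) :
    toFinsuppE e i = (e i : ℕ) := rfl

theorem toFinsuppE_injective {n d : ℕ} : Function.Injective (toFinsuppE (n := n) (d := d)) := by
  intro a b hab
  funext i
  have : (a i : ℕ) = (b i : ℕ) := by
    have := congrArg (fun f => f i) hab
    simpa [toFinsuppE_apply] using this
  exact Fin.ext this

theorem sum_bmono_eval {n d : ℕ} (q : MvPolynomial (Fin n) ℝ)
    (hb : ∀ s ∈ q.support, ∀ i, s i < d + 1) (x : Fin n → ℝ) :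
    ∑ t : Fin n → Fin (d+1), MvPolynomial.coeff (toFinsuppE t) q * bmono t x
      = MvPolynomial.eval x q := by
  have himg : q.support ⊆ Finset.univ.image (toFinsuppE (n := n) (d := d)) := by
    intro s hs
    refine Finset.mem_image.2 ⟨fun i => ⟨s i, hb s hs i⟩, Finset.mem_univ _, ?_⟩
    ext i; simp [toFinsuppE_apply]
  rw [MvPolynomial.eval_eq']
  have h1 : ∑ t : Fin n → Fin (d+1), MvPolynomial.coeff (toFinsuppE t) q * bmono t x
      = ∑ s ∈ Finset.univ.image (toFinsuppE (n := n) (d := d)),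
          MvPolynomial.coeff s q * ∏ i, x i ^ s i := by
    rw [Finset.sum_image (fun a _ b _ h => toFinsuppE_injective h)]
    apply Finset.sum_congr rfl
    intro t _
    simp [bmono, toFinsuppE_apply]
  rw [h1, Finset.sum_subset himg]
  intro s _ hs
  simp [MvPolynomial.notMem_support_iff.1 hs]

/-- index type for the family of functions: inl e ↦ x^e * R(x,y), inr e ↦ x^e -/
abbrev iotaT (n d : ℕ) := (Fin n → Fin (d+1)) ⊕ (Fin n → Fin (d+1))

def fam {n m d : ℕ} (R : (Fin n → ℝ) → (Fin m → ℝ) → ℝ) :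
    iotaT n d → (Fin n → ℝ) → (Fin m → ℝ) → ℝ
  | Sum.inl e => fun x y => bmono e x * R x y
  | Sum.inr e => fun x y => bmono e x

theorem exists_kernel {n m : ℕ} (R : (Fin n → ℝ) → (Fin m → ℝ) → ℝ)
    {U₁ : Set (Fin n → ℝ)} {y : Fin m → ℝ} (p q : MvPolynomial (Fin n) ℝ) (hq : q ≠ 0)
    (hpq : ∀ x ∈ U₁, MvPolynomial.eval x q * R x y = MvPolynomial.eval x p) :
    ∃ d : ℕ, ∃ v : iotaT n d → ℝ, v ≠ 0 ∧
      ∀ x ∈ U₁, ∑ i, fam R i x y * v i = 0 := by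
  set d := max p.totalDegree q.totalDegree with hd
  have hbq : ∀ s ∈ q.support, ∀ i, s i < d + 1 := by
    intro s hs i
    have h1 : s i ≤ s.sum fun _ e => e := by
      by_cases hi : i ∈ s.support
      · exact Finset.single_le_sum (fun a _ => Nat.zero_le _) hi
      · simp [Finsupp.notMem_support_iff.1 hi]
    have h2 := MvPolynomial.le_totalDegree hs
    omega
  have hbp : ∀ s ∈ p.support, ∀ i, s i < d + 1 := by
    intro s hs i
    have h1 : s i ≤ s.sum fun _ e => e := by
      by_cases hi : i ∈ s.support
      · exact Finset.single_le_sum (fun a _ => Nat.zero_le _) hi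
      · simp [Finsupp.notMem_support_iff.1 hi]
    have h2 := MvPolynomial.le_totalDegree hs
    omega
  set v : iotaT n d → ℝ := Sum.elim (fun t => MvPolynomial.coeff (toFinsuppE t) q)
    (fun t => -MvPolynomial.coeff (toFinsuppE t) p) with hv
  refine ⟨d, v, ?_, ?_⟩
  · obtain ⟨s, hs⟩ := (MvPolynomial.ne_zero_iff.1 hq)
    intro hv0
    have ht : toFinsuppE (n := n) (d := d)
        (fun i => ⟨s i, hbq s (MvPolynomial.mem_support_iff.2 hs) i⟩) = s := by
      ext i; simp [toFinsuppE_apply]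
    have := congrFun hv0 (Sum.inl (fun i => ⟨s i, hbq s (MvPolynomial.mem_support_iff.2 hs) i⟩))
    rw [hv] at this
    simp only [Sum.elim_inl, ht, Pi.zero_apply] at this
    exact hs this
  · intro x hx
    rw [Fintype.sum_sum_type]
    have e1 : ∑ t : Fin n → Fin (d+1), fam R (Sum.inl t) x y * v (Sum.inl t)
        = MvPolynomial.eval x q * R x y := by
      rw [← sum_bmono_eval q hbq x, Finset.sum_mul]
      apply Finset.sum_congr rfl
      intro t _
      simp [fam, hv]; ring
    have e2 : ∑ t : Fin n → Fin (d+1), fam R (Sum.inr t) x y * v (Sum.inr t)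
        = -MvPolynomial.eval x p := by
      rw [← sum_bmono_eval p hbp x, ← Finset.sum_neg_distrib]
      apply Finset.sum_congr rfl
      intro t _
      simp [fam, hv]; ring
    rw [e1, e2, hpq x hx]
    ring

theorem det_zero_of_kernel {n m d : ℕ} (R : (Fin n → ℝ) → (Fin m → ℝ) → ℝ)
    {U₁ : Set (Fin n → ℝ)} {y : Fin m → ℝ} {v : iotaT n d → ℝ} (hv0 : v ≠ 0)
    (hker : ∀ x ∈ U₁, ∑ i, fam R i x y * v i = 0)
    (xs : iotaT n d → (Fin n → ℝ)) (hxs : ∀ a, xs a ∈ U₁) :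
    (Matrix.of fun a b : iotaT n d => fam R b (xs a) y).det = 0 := by
  rw [← Matrix.exists_mulVec_eq_zero_iff]
  refine ⟨v, hv0, ?_⟩
  funext a
  simpa [Matrix.mulVec, dotProduct] using hker (xs a) (hxs a)

/-- Step 1 : Baire category gives a uniform degree on some ball. -/
theorem step1 {n m : ℕ} {U₁ : Set (Fin n → ℝ)} {U₂ : Set (Fin m → ℝ)}
    (h2ne : U₂.Nonempty) (h2op : IsOpen U₂)
    (R : (Fin n → ℝ) → (Fin m → ℝ) → ℝ)
    (hR : AnalyticOnNhd ℝ (fun p : (Fin n → ℝ) × (Fin m → ℝ) => R p.1 p.2) (U₁ ×ˢ U₂))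
    (hx : ∀ y ∈ U₂, ∃ p q : MvPolynomial (Fin n) ℝ, q ≠ 0 ∧
      ∀ x ∈ U₁, MvPolynomial.eval x q * R x y = MvPolynomial.eval x p) :
    ∃ d : ℕ, ∃ B : Set (Fin m → ℝ), IsOpen B ∧ B.Nonempty ∧ B ⊆ U₂ ∧
      ∀ y ∈ B, ∀ xs : iotaT n d → (Fin n → ℝ), (∀ a, xs a ∈ U₁) →
        (Matrix.of fun a b : iotaT n d => fam R b (xs a) y).det = 0 := by
  haveI : Nonempty U₂ := h2ne.to_subtype
  haveI : LocallyCompactSpace U₂ := h2op.locallyCompactSpace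
  set A : ℕ → Set U₂ := fun d => {y | ∀ xs : iotaT n d → (Fin n → ℝ), (∀ a, xs a ∈ U₁) →
    (Matrix.of fun a b : iotaT n d => fam R b (xs a) y.1).det = 0} with hA
  have hclosed : ∀ d, IsClosed (A d) := by
    intro d
    have : A d = ⋂ xs : {xs : iotaT n d → (Fin n → ℝ) // ∀ a, xs a ∈ U₁},
        {y : U₂ | (Matrix.of fun a b : iotaT n d => fam R b (xs.1 a) y.1).det = 0} := by
      ext y
      simp only [hA, Set.mem_setOf_eq, Set.mem_iInter, Subtype.forall]
    rw [this]
    refine isClosed_iInter fun xs => isClosed_eq ?_ continuous_const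
    apply Continuous.matrix_det
    apply continuous_matrix
    intro a b
    have hRc : ∀ x ∈ U₁, Continuous fun y : U₂ => R x y.1 := by
      intro x hxx
      have h1 : ContinuousOn (fun y : Fin m → ℝ => R x y) U₂ := by
        have := hR.continuousOn
        exact fun y hyy => ((this.comp (by fun_prop : Continuous fun y : Fin m → ℝ => (x, y)).continuousOn
          (fun y hyy => Set.mk_mem_prod hxx hyy)) y hyy)
      exact h1.restrict
    cases b with
    | inl e =>
      exact ((continuous_const : Continuous fun _ : U₂ => bmono e (xs.1 a)).mul
        (hRc (xs.1 a) (xs.2 a)))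
    | inr e => exact continuous_const
  have hcover : ⋃ d, A d = Set.univ := by
    ext y
    simp only [Set.mem_iUnion, Set.mem_univ, iff_true]
    obtain ⟨p, q, hq, hpq⟩ := hx y.1 y.2
    obtain ⟨d, v, hv0, hker⟩ := exists_kernel R p q hq hpq
    exact ⟨d, fun xs hxs => det_zero_of_kernel R hv0 hker xs hxs⟩
  obtain ⟨d, hd⟩ := nonempty_interior_of_iUnion_of_closed hclosed hcover
  obtain ⟨y₀, hy₀⟩ := hd
  refine ⟨d, Subtype.val '' interior (A d), ?_, ⟨y₀.1, Set.mem_image_of_mem _ hy₀⟩, ?_, ?_⟩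
  · exact h2op.isOpenEmbedding_subtypeVal.isOpenMap _ isOpen_interior
  · rintro y ⟨y', _, rfl⟩; exact y'.2
  · rintro y ⟨y', hy', rfl⟩ xs hxs
    exact interior_subset hy' xs hxs

/-- entry functions are jointly analytic -/
theorem fam_analytic {n m d : ℕ} {U₁ : Set (Fin n → ℝ)} {U₂ : Set (Fin m → ℝ)}
    (R : (Fin n → ℝ) → (Fin m → ℝ) → ℝ)
    (hR : AnalyticOnNhd ℝ (fun p : (Fin n → ℝ) × (Fin m → ℝ) => R p.1 p.2) (U₁ ×ˢ U₂))
    (i : iotaT n d) :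
    AnalyticOnNhd ℝ (fun w : (Fin n → ℝ) × (Fin m → ℝ) => fam R i w.1 w.2) (U₁ ×ˢ U₂) := by
  have hmono : ∀ e : Fin n → Fin (d+1),
      AnalyticOnNhd ℝ (fun w : (Fin n → ℝ) × (Fin m → ℝ) => bmono e w.1) (U₁ ×ˢ U₂) := by
    intro e
    apply Finset.analyticOnNhd_fun_prod
    intro j _
    apply AnalyticOnNhd.pow
    exact fun w _ => (((ContinuousLinearMap.proj j).comp
      (ContinuousLinearMap.fst ℝ (Fin n → ℝ) (Fin m → ℝ))).analyticAt w)
  cases i with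
  | inl e => exact (hmono e).mul hR
  | inr e => exact hmono e

/-- Step 2: analytic continuation -- the full determinant vanishes everywhere. -/
theorem step2 {n m d : ℕ} {U₁ : Set (Fin n → ℝ)} {U₂ : Set (Fin m → ℝ)}
    (h1ne : U₁.Nonempty) (h1op : IsOpen U₁) (h1conn : IsConnected U₁)
    (h2op : IsOpen U₂) (h2conn : IsConnected U₂)
    (R : (Fin n → ℝ) → (Fin m → ℝ) → ℝ)
    (hR : AnalyticOnNhd ℝ (fun p : (Fin n → ℝ) × (Fin m → ℝ) => R p.1 p.2) (U₁ ×ˢ U₂))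
    {B : Set (Fin m → ℝ)} (hBop : IsOpen B) (hBne : B.Nonempty) (hBsub : B ⊆ U₂)
    (hB : ∀ y ∈ B, ∀ xs : iotaT n d → (Fin n → ℝ), (∀ a, xs a ∈ U₁) →
        (Matrix.of fun a b : iotaT n d => fam R b (xs a) y).det = 0) :
    ∀ y ∈ U₂, ∀ xs : iotaT n d → (Fin n → ℝ), (∀ a, xs a ∈ U₁) →
        (Matrix.of fun a b : iotaT n d => fam R b (xs a) y).det = 0 := by
  set E := (iotaT n d → (Fin n → ℝ)) × (Fin m → ℝ)
  set F : E → ℝ := fun z => (Matrix.of fun a b : iotaT n d => fam R b (z.1 a) z.2).det with hF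
  set Ω : Set E := (Set.univ.pi fun _ : iotaT n d => U₁) ×ˢ U₂ with hΩ
  have hFanal : AnalyticOnNhd ℝ F Ω := by
    have : F = fun z => ∑ σ : Equiv.Perm (iotaT n d),
        ((Equiv.Perm.sign σ : ℤ) : ℝ) * ∏ a, fam R a (z.1 (σ a)) z.2 := by
      funext z
      show (Matrix.of fun a b : iotaT n d => fam R b (z.1 a) z.2).det = _
      rw [Matrix.det_apply']
      rfl
    rw [this]
    apply Finset.analyticOnNhd_fun_sum
    intro σ _
    apply AnalyticOnNhd.mul
    · exact fun z _ => analyticAt_const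
    apply Finset.analyticOnNhd_fun_prod
    intro a _
    have hL : AnalyticOnNhd ℝ
        (fun z : E => ((z.1 (σ a), z.2) : (Fin n → ℝ) × (Fin m → ℝ))) Ω := by
      intro z _
      exact (((ContinuousLinearMap.proj (σ a) :
          (iotaT n d → (Fin n → ℝ)) →L[ℝ] (Fin n → ℝ)).comp
        (ContinuousLinearMap.fst ℝ _ _)).prod (ContinuousLinearMap.snd ℝ _ _)).analyticAt z
    refine (fam_analytic R hR a).comp hL ?_
    rintro z ⟨hz1, hz2⟩
    exact Set.mk_mem_prod (hz1 (σ a) (Set.mem_univ _)) hz2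
  have hΩconn : IsPreconnected Ω :=
    (isPreconnected_univ_pi fun _ => h1conn.isPreconnected).prod h2conn.isPreconnected
  obtain ⟨x₀, hx₀⟩ := h1ne
  obtain ⟨y₀, hy₀⟩ := hBne
  have hz₀ : ((fun _ => x₀, y₀) : E) ∈ Ω :=
    Set.mk_mem_prod (fun _ _ => hx₀) (hBsub hy₀)
  have hev : F =ᶠ[nhds ((fun _ => x₀, y₀) : E)] 0 := by
    have hopen : IsOpen ((Set.univ.pi fun _ : iotaT n d => U₁) ×ˢ B) :=
      (isOpen_set_pi Set.finite_univ fun _ _ => h1op).prod hBop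
    filter_upwards [hopen.mem_nhds (Set.mk_mem_prod (fun _ _ => hx₀) hy₀)] with z hz
    exact hB z.2 hz.2 z.1 (fun a => hz.1 a (Set.mem_univ _))
  have := hFanal.eqOn_zero_of_preconnected_of_eventuallyEq_zero hΩconn hz₀ hev
  intro y hy xs hxs
  exact this (Set.mk_mem_prod (fun a _ => hxs a) hy)

theorem fam_continuous_subtype {n m d : ℕ} {U₁ : Set (Fin n → ℝ)} {U₂ : Set (Fin m → ℝ)}
    (R : (Fin n → ℝ) → (Fin m → ℝ) → ℝ)
    (hR : AnalyticOnNhd ℝ (fun p : (Fin n → ℝ) × (Fin m → ℝ) => R p.1 p.2) (U₁ ×ˢ U₂))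
    (i : iotaT n d) {x : Fin n → ℝ} (hx : x ∈ U₁) :
    Continuous fun y : U₂ => fam R i x y.1 := by
  have hRc : Continuous fun y : U₂ => R x y.1 := by
    have h1 : ContinuousOn (fun y : Fin m → ℝ => R x y) U₂ := by
      have := hR.continuousOn
      exact fun y hyy => ((this.comp (by fun_prop :
        Continuous fun y : Fin m → ℝ => (x, y)).continuousOn
        (fun y hyy => Set.mk_mem_prod hx hyy)) y hyy)
    exact h1.restrict
  cases i with
  | inl e => exact continuous_const.mul hRc
  | inr e => exact continuous_const

theorem eval_monomial_toFinsuppE {n d : ℕ} (e : Fin n → Fin (d+1)) (c : ℝ) (x : Fin n → ℝ) :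
    MvPolynomial.eval x (MvPolynomial.monomial (toFinsuppE e) c) = c * bmono e x := by
  rw [MvPolynomial.eval_monomial]
  congr 1
  rw [Finsupp.prod_pow]
  simp [bmono, toFinsuppE_apply]

/-- Step 3: the main construction. -/
theorem step3 {n m d : ℕ} {U₁ : Set (Fin n → ℝ)} {U₂ : Set (Fin m → ℝ)}
    (h1ne : U₁.Nonempty) (h1op : IsOpen U₁)
    (h2ne : U₂.Nonempty) (h2op : IsOpen U₂)
    (R : (Fin n → ℝ) → (Fin m → ℝ) → ℝ)
    (hR : AnalyticOnNhd ℝ (fun p : (Fin n → ℝ) × (Fin m → ℝ) => R p.1 p.2) (U₁ ×ˢ U₂))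
    (hyRat : ∀ x ∈ U₁, ∃ p q : MvPolynomial (Fin m) ℝ, q ≠ 0 ∧
      ∀ y ∈ U₂, MvPolynomial.eval y q * R x y = MvPolynomial.eval y p)
    (hdet0 : ∀ y ∈ U₂, ∀ xs : iotaT n d → (Fin n → ℝ), (∀ a, xs a ∈ U₁) →
        (Matrix.of fun a b : iotaT n d => fam R b (xs a) y).det = 0) :
    ∃ P Q : MvPolynomial (Fin (n + m)) ℝ, Q ≠ 0 ∧
      ∀ x ∈ U₁, ∀ y ∈ U₂,
        MvPolynomial.eval (Fin.append x y) Q * R x y =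
          MvPolynomial.eval (Fin.append x y) P := by
  classical
  obtain ⟨x₀, hx₀⟩ := h1ne
  obtain ⟨yy₀, hyy₀⟩ := h2ne
  set N := Fintype.card (iotaT n d) with hN
  haveI : Nonempty (iotaT n d) := ⟨Sum.inr (fun _ => 0)⟩
  have hN1 : 1 ≤ N := Fintype.card_pos
  set P : ℕ → Prop := fun k => ∃ (xs : Fin k → (Fin n → ℝ)) (c : Fin k → iotaT n d)
    (y : Fin m → ℝ), (∀ a, xs a ∈ U₁) ∧ y ∈ U₂ ∧
      (Matrix.of fun a b : Fin k => fam R (c b) (xs a) y).det ≠ 0 with hP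
  have hP1 : P 1 := by
    refine ⟨fun _ => x₀, fun _ => Sum.inr (fun _ => 0), yy₀, fun _ => hx₀, hyy₀, ?_⟩
    rw [Matrix.det_fin_one]
    simp [fam, bmono]
  have hPN : ¬ P N := by
    rintro ⟨xs, c, y, hxs, hyU, hdet⟩
    by_cases hinj : Function.Injective c
    · have hbij : Function.Bijective c :=
        (Fintype.bijective_iff_injective_and_card c).2 ⟨hinj, by simp [hN]⟩
      set e := Equiv.ofBijective c hbij with he
      have h0 := hdet0 y hyU (xs ∘ e.symm) (fun a => hxs _)
      rw [← Matrix.exists_mulVec_eq_zero_iff] at h0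
      obtain ⟨v, hv0, hvker⟩ := h0
      apply hdet
      rw [← Matrix.exists_mulVec_eq_zero_iff]
      refine ⟨v ∘ e, fun h => hv0 ?_, ?_⟩
      · funext i
        simpa using congrFun h (e.symm i)
      · funext a
        have := congrFun hvker (e a)
        simp only [Matrix.mulVec, dotProduct, Matrix.of_apply, Function.comp_apply,
          Equiv.symm_apply_apply, Pi.zero_apply] at this ⊢
        rw [← Equiv.sum_comp e (fun i => fam R i (xs a) y * v i)] at this
        exact this
    · rw [Function.not_injective_iff] at hinj
      obtain ⟨b, b', heq, hne⟩ := hinj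
      exact hdet (Matrix.det_zero_of_column_eq hne (fun k => by simp [heq]))
  obtain ⟨r, hr1, hrN, hPr1, xsr, cr, ystar, hxsr, hystar, hD⟩ :
      ∃ r, 1 ≤ r ∧ r < N ∧ ¬ P (r+1) ∧ ∃ (xs : Fin r → (Fin n → ℝ)) (c : Fin r → iotaT n d)
        (y : Fin m → ℝ), (∀ a, xs a ∈ U₁) ∧ y ∈ U₂ ∧
          (Matrix.of fun a b : Fin r => fam R (c b) (xs a) y).det ≠ 0 := by
    have h1 : 1 ≤ Nat.findGreatest P N := Nat.le_findGreatest hN1 hP1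
    have h2 : P (Nat.findGreatest P N) := Nat.findGreatest_of_ne_zero rfl (by omega)
    have h3 : Nat.findGreatest P N < N :=
      lt_of_le_of_ne (Nat.findGreatest_le N) (fun h => hPN (h ▸ h2))
    exact ⟨_, h1, h3, Nat.findGreatest_is_greatest (Nat.lt_succ_self _) (by omega), h2⟩
  have hcr_inj : Function.Injective cr := by
    intro b b' hbb
    by_contra hne
    exact hD (Matrix.det_zero_of_column_eq hne (fun k => by simp [hbb]))
  obtain ⟨i₀, hi₀⟩ : ∃ i₀ : iotaT n d, ∀ b, cr b ≠ i₀ := by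
    by_contra hcon
    push_neg at hcon
    have hs : Function.Surjective cr := by
      intro i
      obtain ⟨b, hb⟩ := hcon i
      exact ⟨b, hb⟩
    have h := Fintype.card_le_of_surjective cr hs
    rw [Fintype.card_fin] at h
    have h' : N ≤ r := h
    omega
  set cols : Fin (r+1) → iotaT n d := Fin.snoc cr i₀ with hcols
  have hcols_last : cols (Fin.last r) = i₀ := Fin.snoc_last _ _
  have hcols_cast : ∀ b : Fin r, cols b.castSucc = cr b := fun b => Fin.snoc_castSucc _ _ _
  have hcols_inj : Function.Injective cols := by
    intro a b hab
    induction a using Fin.lastCases with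
    | last =>
      induction b using Fin.lastCases with
      | last => rfl
      | cast b =>
        rw [hcols_last, hcols_cast] at hab
        exact absurd hab.symm (hi₀ b)
    | cast a =>
      induction b using Fin.lastCases with
      | last =>
        rw [hcols_last, hcols_cast] at hab
        exact absurd hab (hi₀ a)
      | cast b =>
        rw [hcols_cast, hcols_cast] at hab
        rw [hcr_inj hab]
  set W : Fin (r+1) → (Fin m → ℝ) → ℝ := fun j y =>
    (Matrix.of fun a b : Fin r => fam R (cols (Fin.succAbove j b)) (xsr a) y).det with hW
  have I1 : ∀ x ∈ U₁, ∀ y ∈ U₂,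
      ∑ j : Fin (r+1), (-1:ℝ)^(r + (j:ℕ)) * fam R (cols j) x y * W j y = 0 := by
    intro x hx y hyU
    set M : Matrix (Fin (r+1)) (Fin (r+1)) ℝ :=
      Matrix.of fun a b : Fin (r+1) => fam R (cols b) (Fin.snoc (α := fun _ => Fin n → ℝ) xsr x a) y with hM
    have hd0 : M.det = 0 := by
      by_contra hne
      refine hPr1 ⟨Fin.snoc (α := fun _ => Fin n → ℝ) xsr x, cols, y, ?_, hyU, hne⟩
      intro a
      induction a using Fin.lastCases with
      | last => simpa using hx
      | cast a => simpa using hxsr a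
    rw [Matrix.det_succ_row _ (Fin.last r)] at hd0
    rw [← hd0]
    apply Finset.sum_congr rfl
    intro j _
    have e1 : M (Fin.last r) j = fam R (cols j) x y := by
      simp [hM]
    have e2 : (M.submatrix (Fin.last r).succAbove j.succAbove).det = W j y := by
      have : M.submatrix (Fin.last r).succAbove j.succAbove
          = Matrix.of fun a b : Fin r => fam R (cols (Fin.succAbove j b)) (xsr a) y := by
        ext a b
        simp [hM, Fin.succAbove_last]
      rw [this]
    rw [e1, e2]
    simp
  have I2 : W (Fin.last r) ystar ≠ 0 := by
    have hmat : (Matrix.of fun a b : Fin r =>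
          fam R (cols (Fin.succAbove (Fin.last r) b)) (xsr a) ystar)
        = Matrix.of fun a b : Fin r => fam R (cr b) (xsr a) ystar := by
      ext a b
      simp [Fin.succAbove_last, hcols_cast]
    show (Matrix.of fun a b : Fin r =>
      fam R (cols (Fin.succAbove (Fin.last r) b)) (xsr a) ystar).det ≠ 0
    rw [hmat]
    exact hD
  choose pt qt hqt hiden using fun a : Fin r => hyRat (xsr a) (hxsr a)
  set pe : Fin r → iotaT n d → MvPolynomial (Fin m) ℝ := fun a i =>
    Sum.elim (fun e => MvPolynomial.C (bmono e (xsr a)) * pt a)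
      (fun e => MvPolynomial.C (bmono e (xsr a)) * qt a) i with hpe
  set G : Fin (r+1) → MvPolynomial (Fin m) ℝ := fun j =>
    (Matrix.of fun a b : Fin r => pe a (cols (Fin.succAbove j b))).det with hG
  have hGeval : ∀ j, ∀ y ∈ U₂, MvPolynomial.eval y (G j)
      = (∏ a, MvPolynomial.eval y (qt a)) * W j y := by
    intro j y hyU
    have hentry : ∀ (a : Fin r) (i : iotaT n d),
        MvPolynomial.eval y (pe a i) = MvPolynomial.eval y (qt a) * fam R i (xsr a) y := by
      intro a i
      cases i with
      | inl e =>
        simp only [hpe, Sum.elim_inl, map_mul, MvPolynomial.eval_C, fam]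
        rw [← hiden a y hyU]
        ring
      | inr e =>
        simp only [hpe, Sum.elim_inr, map_mul, MvPolynomial.eval_C, fam]
        ring
    have h1 : MvPolynomial.eval y (G j)
        = ((MvPolynomial.eval y).mapMatrix
            (Matrix.of fun a b : Fin r => pe a (cols (Fin.succAbove j b)))).det :=
      RingHom.map_det _ _
    rw [h1]
    have h2 : (MvPolynomial.eval y).mapMatrix
          (Matrix.of fun a b : Fin r => pe a (cols (Fin.succAbove j b)))
        = Matrix.diagonal (fun a => MvPolynomial.eval y (qt a)) *
          Matrix.of (fun a b : Fin r => fam R (cols (Fin.succAbove j b)) (xsr a) y) := by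
      ext a b
      rw [Matrix.diagonal_mul]
      exact hentry a _
    rw [h2, Matrix.det_mul, Matrix.det_diagonal]
  set Bpoly : MvPolynomial (Fin m) ℝ := ∏ a, qt a with hBpoly
  have hB0 : Bpoly ≠ 0 := Finset.prod_ne_zero_iff.2 (fun a _ => hqt a)
  obtain ⟨j₀, e₀, hj₀, hWj₀⟩ : ∃ (j₀ : Fin (r+1)) (e₀ : Fin n → Fin (d+1)),
      cols j₀ = Sum.inl e₀ ∧ W j₀ ystar ≠ 0 := by
    by_contra hcon
    push_neg at hcon
    cases hi₀eq : i₀ with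
    | inl e =>
      exact I2 (hcon (Fin.last r) e (by rw [hcols_last, hi₀eq]))
    | inr einf =>
      set h : MvPolynomial (Fin n) ℝ := ∑ j : Fin (r+1),
        Sum.elim (fun _ => (0 : MvPolynomial (Fin n) ℝ))
          (fun e => MvPolynomial.monomial (toFinsuppE e) ((-1:ℝ)^(r + (j:ℕ)) * W j ystar))
          (cols j) with hh
      have heval : ∀ x ∈ U₁, MvPolynomial.eval x h = 0 := by
        intro x hx
        rw [hh, map_sum]
        rw [← I1 x hx ystar hystar]
        apply Finset.sum_congr rfl
        intro j _
        rcases hc : cols j with e | e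
        · simp only [Sum.elim_inl, map_zero]
          rw [hcon j e hc]
          ring
        · simp only [Sum.elim_inr]
          rw [eval_monomial_toFinsuppE]
          simp only [fam]
          ring
      have hzero : h = 0 := mvpoly_eq_zero_of_eval_zero_on_open h h1op ⟨x₀, hx₀⟩ heval
      have hcoeff := congrArg (MvPolynomial.coeff (toFinsuppE einf)) hzero
      rw [hh, MvPolynomial.coeff_sum, MvPolynomial.coeff_zero] at hcoeff
      have hside1 : ∀ j ∈ Finset.univ, j ≠ Fin.last r →
          MvPolynomial.coeff (toFinsuppE einf)
            (Sum.elim (fun _ => (0 : MvPolynomial (Fin n) ℝ))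
              (fun e => MvPolynomial.monomial (toFinsuppE e) ((-1:ℝ)^(r + (j:ℕ)) * W j ystar))
              (cols j)) = 0 := by
        intro j _ hj
        rcases hc : cols j with e | e
        · simp
        · simp only [Sum.elim_inr, MvPolynomial.coeff_monomial]
          rw [if_neg]
          intro habs
          have he : e = einf := toFinsuppE_injective habs
          apply hj
          apply hcols_inj
          rw [hc, he, ← hi₀eq, hcols_last]
      have hside2 : Fin.last r ∉ Finset.univ →
          MvPolynomial.coeff (toFinsuppE einf)
            (Sum.elim (fun _ => (0 : MvPolynomial (Fin n) ℝ))
              (fun e => MvPolynomial.monomial (toFinsuppE e)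
                ((-1:ℝ)^(r + ((Fin.last r : Fin (r+1)):ℕ)) * W (Fin.last r) ystar))
              (cols (Fin.last r))) = 0 :=
        fun habs => absurd (Finset.mem_univ _) habs
      rw [Finset.sum_eq_single (Fin.last r) hside1 hside2] at hcoeff
      rw [hcols_last, hi₀eq] at hcoeff
      simp only [Sum.elim_inr, MvPolynomial.coeff_monomial, if_pos rfl] at hcoeff
      rcases mul_eq_zero.1 hcoeff with hbad | hgood
      · exact pow_ne_zero _ (by norm_num : (-1:ℝ) ≠ 0) hbad
      · exact I2 hgood
  have hWcont : ContinuousOn (W j₀) U₂ := by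
    rw [continuousOn_iff_continuous_restrict]
    have hres : Set.domRestrict U₂ (W j₀) = fun y : U₂ =>
        (Matrix.of (fun a b : Fin r => fam R (cols (Fin.succAbove j₀ b)) (xsr a) y.1)).det := rfl
    rw [hres]
    apply Continuous.matrix_det
    apply continuous_matrix
    intro a b
    exact fam_continuous_subtype R hR _ (hxsr a)
  have hcontAt : ContinuousAt (W j₀) ystar := hWcont.continuousAt (h2op.mem_nhds hystar)
  have hev : ∀ᶠ y in nhds ystar, W j₀ y ≠ 0 ∧ y ∈ U₂ :=
    (hcontAt.eventually_ne hWj₀).and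
      (Filter.eventually_of_mem (h2op.mem_nhds hystar) (fun y hy => hy))
  obtain ⟨V, hVsub, hVopen, hVy⟩ := _root_.eventually_nhds_iff.1 hev
  obtain ⟨y₀, hy₀V, hBval⟩ : ∃ y₀ ∈ V, MvPolynomial.eval y₀ Bpoly ≠ 0 := by
    by_contra hconB
    push_neg at hconB
    exact hB0 (mvpoly_eq_zero_of_eval_zero_on_open _ hVopen ⟨ystar, hVy⟩ hconB)
  have hy₀U : y₀ ∈ U₂ := (hVsub y₀ hy₀V).2
  have hWy₀ : W j₀ y₀ ≠ 0 := (hVsub y₀ hy₀V).1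
  have hGy₀ : MvPolynomial.eval y₀ (G j₀) ≠ 0 := by
    rw [hGeval j₀ y₀ hy₀U]
    refine mul_ne_zero ?_ hWy₀
    have hBv : (∏ a, MvPolynomial.eval y₀ (qt a)) = MvPolynomial.eval y₀ Bpoly := by
      rw [hBpoly, map_prod]
    rw [hBv]
    exact hBval
  set monX : (Fin n → Fin (d+1)) → MvPolynomial (Fin (n+m)) ℝ := fun e =>
    ∏ i : Fin n, MvPolynomial.X (Fin.castAdd m i) ^ ((e i : ℕ)) with hmonX
  have hmonX_eval : ∀ (e : Fin n → Fin (d+1)) (x : Fin n → ℝ) (y : Fin m → ℝ),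
      MvPolynomial.eval (Fin.append x y) (monX e) = bmono e x := by
    intro e x y
    rw [hmonX]
    simp only [map_prod, map_pow, MvPolynomial.eval_X, bmono, Fin.append_left]
  have hemb_eval : ∀ (g : MvPolynomial (Fin m) ℝ) (x : Fin n → ℝ) (y : Fin m → ℝ),
      MvPolynomial.eval (Fin.append x y) (MvPolynomial.rename (Fin.natAdd n) g)
        = MvPolynomial.eval y g := by
    intro g x y
    rw [MvPolynomial.eval_rename]
    have hcomp : Fin.append x y ∘ Fin.natAdd n = y := funext fun j => Fin.append_right x y j
    rw [hcomp]
  set Qp : MvPolynomial (Fin (n+m)) ℝ := ∑ j : Fin (r+1),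
    Sum.elim (fun e => MvPolynomial.C ((-1:ℝ)^(r + (j:ℕ))) * monX e *
      MvPolynomial.rename (Fin.natAdd n) (G j)) (fun _ => 0) (cols j) with hQp
  set Pp : MvPolynomial (Fin (n+m)) ℝ := ∑ j : Fin (r+1),
    Sum.elim (fun _ => (0 : MvPolynomial (Fin (n+m)) ℝ))
      (fun e => -(MvPolynomial.C ((-1:ℝ)^(r + (j:ℕ))) * monX e *
        MvPolynomial.rename (Fin.natAdd n) (G j))) (cols j) with hPp
  refine ⟨Pp, Qp, ?_, ?_⟩
  · intro hQ0
    set h₂ : MvPolynomial (Fin n) ℝ := ∑ j : Fin (r+1),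
      Sum.elim (fun e => MvPolynomial.monomial (toFinsuppE e)
        ((-1:ℝ)^(r + (j:ℕ)) * MvPolynomial.eval y₀ (G j))) (fun _ => 0) (cols j) with hh₂
    have hallx : ∀ x : Fin n → ℝ,
        MvPolynomial.eval x h₂ = MvPolynomial.eval (Fin.append x y₀) Qp := by
      intro x
      rw [hh₂, hQp, map_sum, map_sum]
      apply Finset.sum_congr rfl
      intro j _
      rcases hc : cols j with e | e
      · simp only [Sum.elim_inl]
        rw [eval_monomial_toFinsuppE]
        simp only [map_mul, MvPolynomial.eval_C]
        rw [hmonX_eval, hemb_eval]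
        ring
      · simp only [Sum.elim_inr, map_zero]
    have hz : h₂ = 0 := by
      apply MvPolynomial.funext
      intro x
      rw [hallx x, hQ0]
      simp
    have hcoeff := congrArg (MvPolynomial.coeff (toFinsuppE e₀)) hz
    rw [hh₂, MvPolynomial.coeff_sum, MvPolynomial.coeff_zero] at hcoeff
    have hs1 : ∀ j ∈ Finset.univ, j ≠ j₀ →
        MvPolynomial.coeff (toFinsuppE e₀)
          (Sum.elim (fun e => MvPolynomial.monomial (toFinsuppE e)
            ((-1:ℝ)^(r + (j:ℕ)) * MvPolynomial.eval y₀ (G j))) (fun _ => 0) (cols j)) = 0 := by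
      intro j _ hj
      rcases hc : cols j with e | e
      · simp only [Sum.elim_inl, MvPolynomial.coeff_monomial]
        rw [if_neg]
        intro habs
        have he : e = e₀ := toFinsuppE_injective habs
        apply hj
        apply hcols_inj
        rw [hc, he, hj₀]
      · simp
    have hs2 : j₀ ∉ Finset.univ →
        MvPolynomial.coeff (toFinsuppE e₀)
          (Sum.elim (fun e => MvPolynomial.monomial (toFinsuppE e)
            ((-1:ℝ)^(r + (j₀:ℕ)) * MvPolynomial.eval y₀ (G j₀))) (fun _ => 0) (cols j₀)) = 0 :=
      fun habs => absurd (Finset.mem_univ _) habs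
    rw [Finset.sum_eq_single j₀ hs1 hs2] at hcoeff
    rw [hj₀] at hcoeff
    simp only [Sum.elim_inl, MvPolynomial.coeff_monomial, if_pos rfl] at hcoeff
    rcases mul_eq_zero.1 hcoeff with hbad | hgood
    · exact pow_ne_zero _ (by norm_num : (-1:ℝ) ≠ 0) hbad
    · exact hGy₀ hgood
  · intro x hx y hyU
    rw [← sub_eq_zero]
    have expand : MvPolynomial.eval (Fin.append x y) Qp * R x y
        - MvPolynomial.eval (Fin.append x y) Pp
        = ∑ j : Fin (r+1), (-1:ℝ)^(r + (j:ℕ)) * MvPolynomial.eval y (G j)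
            * fam R (cols j) x y := by
      rw [hQp, hPp, map_sum, map_sum, Finset.sum_mul, ← Finset.sum_sub_distrib]
      apply Finset.sum_congr rfl
      intro j _
      rcases hc : cols j with e | e
      · simp only [Sum.elim_inl, map_zero, map_mul, MvPolynomial.eval_C]
        rw [hmonX_eval, hemb_eval]
        simp only [fam]
        ring
      · simp only [Sum.elim_inr, map_zero, map_neg, map_mul, MvPolynomial.eval_C]
        rw [hmonX_eval, hemb_eval]
        simp only [fam]
        ring
    rw [expand]
    have hterm : ∀ j : Fin (r+1), (-1:ℝ)^(r + (j:ℕ)) * MvPolynomial.eval y (G j)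
        * fam R (cols j) x y
        = (∏ a, MvPolynomial.eval y (qt a)) *
          ((-1:ℝ)^(r + (j:ℕ)) * fam R (cols j) x y * W j y) := by
      intro j
      rw [hGeval j y hyU]
      ring
    rw [Finset.sum_congr rfl (fun j _ => hterm j), ← Finset.mul_sum, I1 x hx y hyU, mul_zero]


/-- a real analytic function of two groups of variables which is rational in
each group separately is jointly rational (Bochner–Martin). -/
theorem real_analytic_separately_rational_is_rational
    (n m : ℕ) (U₁ : Set (Fin n → ℝ)) (U₂ : Set (Fin m → ℝ))
    (h1ne : U₁.Nonempty) (h1op : IsOpen U₁) (h1conn : IsConnected U₁)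
    (h2ne : U₂.Nonempty) (h2op : IsOpen U₂) (h2conn : IsConnected U₂)
    (R : (Fin n → ℝ) → (Fin m → ℝ) → ℝ)
    (hR : AnalyticOnNhd ℝ (fun p : (Fin n → ℝ) × (Fin m → ℝ) => R p.1 p.2) (U₁ ×ˢ U₂))
    (hx : ∀ y ∈ U₂, ∃ p q : MvPolynomial (Fin n) ℝ, q ≠ 0 ∧
      ∀ x ∈ U₁, MvPolynomial.eval x q * R x y = MvPolynomial.eval x p)
    (hy : ∀ x ∈ U₁, ∃ p q : MvPolynomial (Fin m) ℝ, q ≠ 0 ∧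
      ∀ y ∈ U₂, MvPolynomial.eval y q * R x y = MvPolynomial.eval y p) :
    ∃ P Q : MvPolynomial (Fin (n + m)) ℝ, Q ≠ 0 ∧
      ∀ x ∈ U₁, ∀ y ∈ U₂,
        MvPolynomial.eval (Fin.append x y) Q * R x y =
          MvPolynomial.eval (Fin.append x y) P := by
  obtain ⟨d, B, hBop, hBne, hBsub, hB⟩ := step1 h2ne h2op R hR hx
  have hdet0 := step2 h1ne h1op h1conn h2op h2conn R hR hBop hBne hBsub hB
  exact step3 h1ne h1op h2ne h2op R hR hy hdet0
end
end

section
/- Let U, V ⊆ ℂ be open sets and let F : U × V → ℂ be continuous, such that for each w ∈ V the function z ↦ F(z,w) is holomorphic on U, and for each z ∈ U the function w ↦ conj(F(z,w)) is holomorphic on V (i.e., F is antiholomorphic in its second variable). Suppose (z₀,w₀) ∈ U × V satisfies F(z₀,w₀) = 0 and ∂F/∂z(z₀,w₀) ≠ 0. Then there exist r > 0 with the open disc D_r(w₀) ⊆ V and a function α : D_r(w₀) → U such that α(w₀) = z₀, F(α(w),w) = 0 for all w ∈ D_r(w₀), and α is antiholomorphic (the function w ↦ conj(α(w)) is holomorphic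 on D_r(w₀)). -/
open MeasureTheory Complex Set Metric ComplexConjugate Filter

noncomputable section

open Topology Uniformity
open scoped Real


lemma hasDerivAt_conj_comp {g : ℂ → ℂ} {z d : ℂ} (h : HasDerivAt g d ((starRingEnd ℂ) z)) :
    HasDerivAt (fun u => (starRingEnd ℂ) (g ((starRingEnd ℂ) u))) ((starRingEnd ℂ) d) z := by
  rw [hasDerivAt_iff_tendsto] at h ⊢
  have hc : Tendsto (fun u : ℂ => (starRingEnd ℂ) u) (𝓝 z) (𝓝 ((starRingEnd ℂ) z)) :=
    (continuous_conj.tendsto z)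
  have H := h.comp hc
  convert H using 2 with u
  simp only [Function.comp, smul_eq_mul]
  have e1 : (starRingEnd ℂ) u - (starRingEnd ℂ) z = (starRingEnd ℂ) (u - z) := (map_sub _ _ _).symm
  have e2 : (starRingEnd ℂ) (g ((starRingEnd ℂ) u)) - (starRingEnd ℂ) (g ((starRingEnd ℂ) z))
      - (u - z) * (starRingEnd ℂ) d
      = (starRingEnd ℂ) (g ((starRingEnd ℂ) u) - g ((starRingEnd ℂ) z)
        - ((starRingEnd ℂ) (u - z)) * d) := by
    simp only [map_sub, map_mul, Complex.conj_conj]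
  rw [e1, e2, RCLike.norm_conj, RCLike.norm_conj]


/-- Second-order Cauchy estimate. -/
lemma taylor1_bound {g : ℂ → ℂ} {a : ℂ} {ρ M : ℝ} (hρ : 0 < ρ)
    (hg : DifferentiableOn ℂ g (closedBall a ρ))
    (hM : ∀ z ∈ closedBall a ρ, ‖g z‖ ≤ M)
    {u : ℂ} (hu : ‖u‖ ≤ ρ / 2) :
    ‖g (a + u) - g a - u * deriv g a‖ ≤ 2 * M * ‖u‖ ^ 2 / ρ ^ 2 := by
  have hM0 : 0 ≤ M := le_trans (norm_nonneg _) (hM a (mem_closedBall_self hρ.le))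
  set R : NNReal := ρ.toNNReal with hR
  have hRρ : (R : ℝ) = ρ := Real.coe_toNNReal _ hρ.le
  have hR0 : 0 < R := by simpa [hR, Real.toNNReal_pos] using hρ
  have hg' : DifferentiableOn ℂ g (closedBall a (R : ℝ)) := by rwa [hRρ]
  have hps : HasFPowerSeriesOnBall g (cauchyPowerSeries g a R) a R :=
    hg'.hasFPowerSeriesOnBall hR0
  set p := cauchyPowerSeries g a (R : ℝ) with hp
  -- coefficient bounds
  have hcoef : ∀ n, ‖p n‖ ≤ M * (ρ⁻¹) ^ n := by
    intro n
    refine (norm_cauchyPowerSeries_le g a R n).trans ?_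
    have hint : IntervalIntegrable (fun θ : ℝ => ‖g (circleMap a R θ)‖) volume 0 (2*π) := by
      apply ContinuousOn.intervalIntegrable
      apply Continuous.comp_continuousOn continuous_norm
      apply hg'.continuousOn.comp (continuous_circleMap a R).continuousOn
      intro θ _
      exact sphere_subset_closedBall (circleMap_mem_sphere a (by positivity) θ)
    have hle : ∀ θ ∈ Set.Icc (0:ℝ) (2*π), ‖g (circleMap a R θ)‖ ≤ M := by
      intro θ _
      apply hM
      rw [← hRρ]
      exact sphere_subset_closedBall (circleMap_mem_sphere a (by positivity) θ)
    have h1 : (∫ θ : ℝ in (0)..2 * π, ‖g (circleMap a R θ)‖) ≤ 2 * π * M := by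
      have := intervalIntegral.integral_mono_on (a := (0:ℝ)) (b := 2*π) Real.two_pi_pos.le
        hint intervalIntegrable_const hle
      simpa using this
    have h2 : |(R : ℝ)|⁻¹ ^ n = ρ⁻¹ ^ n := by
      rw [_root_.abs_of_nonneg (R.coe_nonneg), hRρ]
    rw [h2]
    have : (2 * π)⁻¹ * ∫ θ : ℝ in (0)..2 * π, ‖g (circleMap a R θ)‖ ≤ M := by
      rw [inv_mul_le_iff₀ (by positivity)]
      linarith [h1]
    exact mul_le_mul_of_nonneg_right this (by positivity)
  -- power-series expansion
  have huρ : ‖u‖ < ρ := lt_of_le_of_lt hu (by linarith)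
  have humem : u ∈ Metric.eball (0 : ℂ) R := by
    rw [Metric.mem_eball, edist_zero_right, ← hRρ] at *
    exact_mod_cast (by rw [hRρ]; exact huρ : ‖u‖ < (R:ℝ))
  have hsum : HasSum (fun n : ℕ => u ^ n • p.coeff n) (g (a + u)) := by
    have := hps.hasSum humem
    simpa only [FormalMultilinearSeries.apply_eq_pow_smul_coeff] using this
  have hc0 : p.coeff 0 = g a := hps.coeff_zero fun _ => 1
  have hc1 : p.coeff 1 = deriv g a := (hps.hasFPowerSeriesAt.deriv).symm
  have hshift : HasSum (fun n : ℕ => u ^ (n + 2) • p.coeff (n + 2))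
      (g (a + u) - ∑ i ∈ Finset.range 2, u ^ i • p.coeff i) :=
    ((hasSum_nat_add_iff' 2).2 hsum)
  have hsumval : g (a + u) - ∑ i ∈ Finset.range 2, u ^ i • p.coeff i
      = g (a + u) - g a - u * deriv g a := by
    rw [Finset.sum_range_succ, Finset.sum_range_one, hc0, hc1]
    simp [smul_eq_mul]
    ring
  set t : ℝ := ‖u‖ / ρ with ht
  have ht0 : 0 ≤ t := by positivity
  have ht2 : t ≤ 1 / 2 := by
    rw [ht, div_le_div_iff₀ (by positivity) (by norm_num)]
    linarith
  have ht1 : t < 1 := lt_of_le_of_lt ht2 (by norm_num)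
  have hterm : ∀ n : ℕ, ‖u ^ (n + 2) • p.coeff (n + 2)‖ ≤ (M * t ^ 2) * t ^ n := by
    intro n
    rw [norm_smul, norm_pow]
    have h1 : ‖p.coeff (n + 2)‖ ≤ M * ρ⁻¹ ^ (n + 2) := by
      rw [← FormalMultilinearSeries.norm_apply_eq_norm_coef]
      exact hcoef (n + 2)
    calc ‖u‖ ^ (n + 2) * ‖p.coeff (n + 2)‖
        ≤ ‖u‖ ^ (n + 2) * (M * ρ⁻¹ ^ (n + 2)) :=
          mul_le_mul_of_nonneg_left h1 (by positivity)
      _ = (M * t ^ 2) * t ^ n := by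
          rw [ht]
          ring
  have hsummable : Summable (fun n : ℕ => (M * t ^ 2) * t ^ n) :=
    (summable_geometric_of_lt_one ht0 ht1).mul_left _
  have hnorm : ‖g (a + u) - g a - u * deriv g a‖ ≤ (M * t ^ 2) * (1 - t)⁻¹ := by
    rw [← hsumval]
    have := hshift.tsum_eq
    rw [← this]
    refine le_trans (norm_tsum_le_tsum_norm (hsummable.of_nonneg_of_le (fun n => norm_nonneg _) hterm)) ?_
    refine le_trans (Summable.tsum_le_tsum hterm (hsummable.of_nonneg_of_le (fun n => norm_nonneg _) hterm) hsummable) ?_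
    rw [tsum_mul_left, tsum_geometric_of_lt_one ht0 ht1]
  refine hnorm.trans ?_
  have hinv : (1 - t)⁻¹ ≤ 2 := by
    rw [inv_le_comm₀ (by linarith) (by norm_num)]
    linarith
  calc (M * t ^ 2) * (1 - t)⁻¹ ≤ (M * t ^ 2) * 2 :=
        mul_le_mul_of_nonneg_left hinv (by positivity)
    _ = 2 * M * ‖u‖ ^ 2 / ρ ^ 2 := by rw [ht]; field_simp

lemma deriv_diff_bound {g : ℂ → ℂ} {a : ℂ} {ρ C : ℝ} (hρ : 0 < ρ)
    (hg : DifferentiableOn ℂ g (closedBall a ρ))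
    (hC : ∀ z ∈ sphere a ρ, ‖g z‖ ≤ C) : ‖deriv g a‖ ≤ C / ρ := by
  refine Complex.norm_deriv_le_of_forall_mem_sphere_norm_le hρ ⟨hg.mono ball_subset_closedBall, ?_⟩ hC
  exact hg.continuousOn.mono closure_ball_subset_closedBall

set_option maxHeartbeats 1000000 in
lemma osgood_local {K : ℂ → ℂ → ℂ} {Ω V : Set ℂ} (hΩ : IsOpen Ω) (hV : IsOpen V)
    (hKc : ContinuousOn (fun p : ℂ × ℂ => K p.1 p.2) (Ω ×ˢ V))
    (h1 : ∀ w ∈ V, DifferentiableOn ℂ (fun z => K z w) Ω)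
    (h2 : ∀ z ∈ Ω, DifferentiableOn ℂ (K z) V) :
    DifferentiableOn ℂ (fun p : ℂ × ℂ => K p.1 p.2) (Ω ×ˢ V) := by
  rintro ⟨a, b⟩ ⟨ha, hb⟩
  simp only [mem_prod] at ha hb
  -- choose a closed polydisc inside the domain
  obtain ⟨ε₁, hε₁, hball₁⟩ := Metric.isOpen_iff.1 hΩ a ha
  obtain ⟨ε₂, hε₂, hball₂⟩ := Metric.isOpen_iff.1 hV b hb
  set ρ : ℝ := min (ε₁ / 2) (ε₂ / 2) with hρdef
  have hρ : 0 < ρ := lt_min (by linarith) (by linarith)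
  have hΩρ : closedBall a ρ ⊆ Ω := by
    refine subset_trans ?_ hball₁
    refine (closedBall_subset_ball ?_)
    exact lt_of_le_of_lt (min_le_left _ _) (by linarith)
  have hVρ : closedBall b ρ ⊆ V := by
    refine subset_trans ?_ hball₂
    refine (closedBall_subset_ball ?_)
    exact lt_of_le_of_lt (min_le_right _ _) (by linarith)
  -- bound on the polydisc
  obtain ⟨M₀, hM₀⟩ := ((isCompact_closedBall a ρ).prod (isCompact_closedBall b ρ)).exists_bound_of_continuousOn
    (hKc.mono (prod_mono hΩρ hVρ))
  set M : ℝ := max M₀ 0 with hM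
  have hMnn : 0 ≤ M := le_max_right _ _
  have hMb : ∀ z ∈ closedBall a ρ, ∀ w ∈ closedBall b ρ, ‖K z w‖ ≤ M := by
    intro z hz w hw
    exact le_trans (hM₀ (z, w) ⟨hz, hw⟩) (le_max_left _ _)
  -- candidate partial derivatives
  set q : ℂ := deriv (K a) b with hq
  set p : ℂ := deriv (fun z => K z b) a with hp
  set L : ℂ × ℂ →L[ℂ] ℂ :=
    p • (ContinuousLinearMap.fst ℂ ℂ ℂ) + q • (ContinuousLinearMap.snd ℂ ℂ ℂ) with hL
  have hLapp : ∀ h : ℂ × ℂ, L h = p * h.1 + q * h.2 := by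
    intro h
    simp [hL, smul_eq_mul]
  suffices H : HasFDerivAt (fun p : ℂ × ℂ => K p.1 p.2) L (a, b) by
    exact (H.differentiableAt).differentiableWithinAt
  rw [hasFDerivAt_iff_isLittleO_nhds_zero]
  -- the three error terms
  set D : ℂ → ℂ := fun w => deriv (fun z => K z w) a with hD
  set E₁ : ℂ × ℂ → ℂ := fun h => K (a + h.1) (b + h.2) - K a (b + h.2) - h.1 * D (b + h.2) with hE₁
  set E₂ : ℂ × ℂ → ℂ := fun h => (D (b + h.2) - p) * h.1 with hE₂
  set E₃ : ℂ × ℂ → ℂ := fun h => K a (b + h.2) - K a b - q * h.2 with hE₃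
  have hsplit : ∀ h : ℂ × ℂ, (fun h : ℂ × ℂ => K (a + h.1, b + h.2).1 (a + h.1, b + h.2).2
      - K (a, b).1 (a, b).2 - L h) h = E₁ h + E₂ h + E₃ h := by
    intro h
    simp only [hE₁, hE₂, hE₃, hLapp]
    ring
  have htend : Tendsto (fun h : ℂ × ℂ => b + h.2) (𝓝 0) (𝓝 b) := by
    have hcont2 : Continuous (fun h : ℂ × ℂ => b + h.2) := by continuity
    simpa using hcont2.tendsto 0
  have hO₃ : E₃ =o[𝓝 (0 : ℂ × ℂ)] (fun h : ℂ × ℂ => h) := by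
    have hda : DifferentiableAt ℂ (K a) b :=
      (h2 a ha).differentiableAt (hV.mem_nhds hb)
    have hd : HasDerivAt (K a) q b := hda.hasDerivAt
    have ho : (fun v => K a v - K a b - (v - b) • q) =o[𝓝 b] (fun v => v - b) :=
      hasDerivAt_iff_isLittleO.1 hd
    have hcomp := ho.comp_tendsto htend
    simp only [Function.comp_def, add_sub_cancel_left, smul_eq_mul] at hcomp
    have h2' : E₃ =o[𝓝 (0 : ℂ × ℂ)] (fun h : ℂ × ℂ => h.2) := by
      refine hcomp.congr (fun h => ?_) (fun h => rfl)
      simp only [hE₃]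
      ring
    exact h2'.trans_isBigO (Asymptotics.isBigO_of_le _ fun h => by
      simpa using norm_snd_le h)
  have hO₁ : E₁ =o[𝓝 (0 : ℂ × ℂ)] (fun h : ℂ × ℂ => h) := by
    rw [Asymptotics.isLittleO_iff]
    intro c hc
    set δ : ℝ := min (ρ / 2) (c * ρ ^ 2 / (2 * M + 1)) with hδdef
    have hδ : 0 < δ := lt_min (by positivity) (by positivity)
    have hsmall : ∀ᶠ h : ℂ × ℂ in 𝓝 0, ‖h‖ < δ := by
      filter_upwards [ball_mem_nhds (0 : ℂ × ℂ) hδ] with h hh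
      simpa [mem_ball_zero_iff] using hh
    filter_upwards [hsmall] with h hh
    have hh1 : ‖h.1‖ ≤ ρ / 2 :=
      le_trans (norm_fst_le h) (le_of_lt (lt_of_lt_of_le hh (min_le_left _ _)))
    have hh2 : ‖h.2‖ ≤ ρ :=
      le_trans (norm_snd_le h) (le_of_lt (lt_of_lt_of_le hh (le_trans (min_le_left _ _) (by linarith))))
    have hwV : b + h.2 ∈ closedBall b ρ := by
      simpa [mem_closedBall, dist_eq_norm, add_sub_cancel_left] using hh2
    have hgd : DifferentiableOn ℂ (fun z => K z (b + h.2)) (closedBall a ρ) :=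
      (h1 _ (hVρ hwV)).mono hΩρ
    have hgb : ∀ z ∈ closedBall a ρ, ‖K z (b + h.2)‖ ≤ M := fun z hz => hMb z hz _ hwV
    have htay := taylor1_bound hρ hgd hgb hh1
    have hEb : ‖E₁ h‖ ≤ 2 * M * ‖h.1‖ ^ 2 / ρ ^ 2 := by
      simpa only [hE₁, hD] using htay
    refine hEb.trans ?_
    have hfst : ‖h.1‖ ≤ ‖h‖ := norm_fst_le h
    have hnn : (0:ℝ) ≤ ‖h‖ := norm_nonneg _
    have h1sq : ‖h.1‖ ^ 2 ≤ ‖h‖ ^ 2 := by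
      apply pow_le_pow_left₀ (norm_nonneg _) hfst
    have hhb : ‖h‖ * (2 * M + 1) ≤ c * ρ ^ 2 := by
      have := le_of_lt (lt_of_lt_of_le hh (min_le_right _ _))
      rw [le_div_iff₀ (by positivity)] at this
      linarith
    rw [div_le_iff₀ (by positivity : (0:ℝ) < ρ ^ 2)]
    calc 2 * M * ‖h.1‖ ^ 2 ≤ 2 * M * ‖h‖ ^ 2 :=
          mul_le_mul_of_nonneg_left h1sq (by linarith)
      _ = ‖h‖ * (2 * M) * ‖h‖ := by ring
      _ ≤ ‖h‖ * (2 * M + 1) * ‖h‖ :=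
          mul_le_mul_of_nonneg_right (mul_le_mul_of_nonneg_left (by linarith) hnn) hnn
      _ ≤ (c * ρ ^ 2) * ‖h‖ := mul_le_mul_of_nonneg_right hhb hnn
      _ = c * ‖h‖ * ρ ^ 2 := by ring
  have hO₂ : E₂ =o[𝓝 (0 : ℂ × ℂ)] (fun h : ℂ × ℂ => h) := by
    rw [Asymptotics.isLittleO_iff]
    intro c hc
    have hu : {p : ℂ × ℂ | dist p.1 p.2 < c * ρ} ∈ 𝓤 ℂ :=
      dist_mem_uniformity (by positivity)
    have hf : ContinuousOn (Function.uncurry fun w z => K z w) (closedBall b ρ ×ˢ sphere a ρ) := by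
      have : (Function.uncurry fun w z => K z w) = (fun p : ℂ × ℂ => K p.1 p.2) ∘ Prod.swap := rfl
      rw [this]
      refine hKc.comp continuous_swap.continuousOn ?_
      rintro ⟨w, z⟩ ⟨hw, hz⟩
      exact ⟨hΩρ (sphere_subset_closedBall hz), hVρ hw⟩
    obtain ⟨v, hv, hvp⟩ := (isCompact_sphere a ρ).mem_uniformity_of_prod hf
      (mem_closedBall_self hρ.le) hu
    have hv' : v ∈ 𝓝 b := by
      rwa [nhdsWithin_eq_nhds.2 (closedBall_mem_nhds b hρ)] at hv
    have hev : ∀ᶠ h : ℂ × ℂ in 𝓝 0, b + h.2 ∈ v := htend.eventually_mem hv'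
    have hsmall : ∀ᶠ h : ℂ × ℂ in 𝓝 0, ‖h‖ < ρ := by
      filter_upwards [ball_mem_nhds (0 : ℂ × ℂ) hρ] with h hh
      simpa [mem_ball_zero_iff] using hh
    filter_upwards [hev, hsmall] with h hhv hh
    have hh2 : ‖h.2‖ ≤ ρ := le_trans (norm_snd_le h) hh.le
    have hwV : b + h.2 ∈ closedBall b ρ := by
      simpa [mem_closedBall, dist_eq_norm, add_sub_cancel_left] using hh2
    have haΩ : DifferentiableAt ℂ (fun z => K z (b + h.2)) a :=
      (h1 _ (hVρ hwV)).differentiableAt (hΩ.mem_nhds ha)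
    have hbΩ : DifferentiableAt ℂ (fun z => K z b) a :=
      (h1 _ (hVρ (mem_closedBall_self hρ.le))).differentiableAt (hΩ.mem_nhds ha)
    have hgd : DifferentiableOn ℂ (fun z => K z (b + h.2) - K z b) (closedBall a ρ) :=
      ((h1 _ (hVρ hwV)).mono hΩρ).sub ((h1 _ (hVρ (mem_closedBall_self hρ.le))).mono hΩρ)
    have hsb : ∀ z ∈ sphere a ρ, ‖K z (b + h.2) - K z b‖ ≤ c * ρ := by
      intro z hz
      have := hvp _ hhv z hz
      rw [← dist_eq_norm]
      exact this.le
    have hder := deriv_diff_bound hρ hgd hsb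
    have hderiv_sub : deriv (fun z => K z (b + h.2) - K z b) a = D (b + h.2) - p := by
      rw [deriv_fun_sub haΩ hbΩ]
    rw [hderiv_sub] at hder
    have hDp : ‖D (b + h.2) - p‖ ≤ c := by
      refine hder.trans ?_
      rw [mul_div_assoc, div_self hρ.ne', mul_one]
    have : ‖E₂ h‖ = ‖D (b + h.2) - p‖ * ‖h.1‖ := by
      simp only [hE₂, norm_mul]
    rw [this]
    exact mul_le_mul hDp (norm_fst_le h) (norm_nonneg _) hc.le
  refine (((hO₁.add hO₂).add hO₃).congr (fun h => ?_) (fun h => rfl))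
  simp only [hE₁, hE₂, hE₃, hLapp, Prod.fst_add, Prod.snd_add]
  ring
set_option maxHeartbeats 1000000 in
lemma holomorphic_implicit {K : ℂ → ℂ → ℂ} {Ω V : Set ℂ} (hΩ : IsOpen Ω) (hV : IsOpen V)
    (hKc : ContinuousOn (fun p : ℂ × ℂ => K p.1 p.2) (Ω ×ˢ V))
    (h1 : ∀ w ∈ V, DifferentiableOn ℂ (fun z => K z w) Ω)
    (h2 : ∀ z ∈ Ω, DifferentiableOn ℂ (K z) V)
    {u₀ w₀ : ℂ} (hu₀ : u₀ ∈ Ω) (hw₀ : w₀ ∈ V)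
    (hK0 : K u₀ w₀ = 0) (hcne : deriv (fun z => K z w₀) u₀ ≠ 0) :
    ∃ r > 0, ball w₀ r ⊆ V ∧ ∃ β : ℂ → ℂ, β w₀ = u₀ ∧
      (∀ w ∈ ball w₀ r, β w ∈ Ω ∧ K (β w) w = 0) ∧
      DifferentiableOn ℂ β (ball w₀ r) := by
  have hKd : DifferentiableOn ℂ (fun p : ℂ × ℂ => K p.1 p.2) (Ω ×ˢ V) :=
    osgood_local hΩ hV hKc h1 h2
  set c : ℂ := deriv (fun z => K z w₀) u₀ with hcdef
  have hcpos : 0 < ‖c‖ := norm_pos_iff.2 hcne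
  set Φ : ℂ → ℂ → ℂ := fun u w => u - c⁻¹ * K u w with hΦdef
  set D : ℂ → ℂ → ℂ := fun u w => deriv (fun z => K z w) u with hDdef
  -- Step A : a closed polydisc inside the domain
  obtain ⟨ε₁, hε₁, hball₁⟩ := Metric.isOpen_iff.1 hΩ u₀ hu₀
  obtain ⟨ε₂, hε₂, hball₂⟩ := Metric.isOpen_iff.1 hV w₀ hw₀
  set ρ : ℝ := min (ε₁ / 2) (ε₂ / 2) with hρdef
  have hρ : 0 < ρ := lt_min (by linarith) (by linarith)
  have hΩρ : closedBall u₀ ρ ⊆ Ω :=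
    subset_trans (closedBall_subset_ball (lt_of_le_of_lt (min_le_left _ _) (by linarith))) hball₁
  have hVρ : closedBall w₀ ρ ⊆ V :=
    subset_trans (closedBall_subset_ball (lt_of_le_of_lt (min_le_right _ _) (by linarith))) hball₂
  -- Step B : a radius δ on which D(·, w₀) is close to c
  have hDan : AnalyticOnNhd ℂ (fun u => D u w₀) Ω := ((h1 w₀ hw₀).analyticOnNhd hΩ).deriv
  have hDat : ContinuousAt (fun u => D u w₀) u₀ :=
    (hDan u₀ hu₀).continuousAt
  have hDc : ∀ᶠ u in 𝓝 u₀, ‖D u w₀ - c‖ < ‖c‖ / 4 := by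
    have : Tendsto (fun u => D u w₀) (𝓝 u₀) (𝓝 c) := hDat.tendsto
    have := this.sub_const c
    rw [sub_self] at this
    have := this.norm
    rw [norm_zero] at this
    exact this.eventually_lt_const (by linarith)
  obtain ⟨t, ht, htb⟩ := Metric.eventually_nhds_iff_ball.1 hDc
  set δ : ℝ := min (t / 2) (ρ / 2) with hδdef
  have hδ : 0 < δ := lt_min (by linarith) (by linarith)
  have hδρ : δ ≤ ρ / 2 := min_le_right _ _
  have hδΩ : closedBall u₀ δ ⊆ closedBall u₀ ρ :=
    closedBall_subset_closedBall (by linarith)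
  have hDδ : ∀ u ∈ closedBall u₀ δ, ‖D u w₀ - c‖ ≤ ‖c‖ / 4 := by
    intro u hu
    refine (htb u ?_).le
    have : δ < t := lt_of_le_of_lt (min_le_left _ _) (by linarith)
    exact lt_of_le_of_lt (mem_closedBall.1 hu) this
  -- Step C : w-uniform control on D via Cauchy estimates
  have hu₁ : {p : ℂ × ℂ | dist p.1 p.2 < ρ * ‖c‖ / 8} ∈ 𝓤 ℂ :=
    dist_mem_uniformity (div_pos (mul_pos hρ hcpos) (by norm_num))
  have hf : ContinuousOn (Function.uncurry fun w z => K z w)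
      (closedBall w₀ ρ ×ˢ closedBall u₀ ρ) := by
    have heq : (Function.uncurry fun w z => K z w) = (fun p : ℂ × ℂ => K p.1 p.2) ∘ Prod.swap := rfl
    rw [heq]
    refine hKc.comp continuous_swap.continuousOn ?_
    rintro ⟨w, z⟩ ⟨hw, hz⟩
    exact ⟨hΩρ hz, hVρ hw⟩
  obtain ⟨v, hv, hvp⟩ := (isCompact_closedBall u₀ ρ).mem_uniformity_of_prod hf
    (mem_closedBall_self hρ.le) hu₁
  have hv' : v ∈ 𝓝 w₀ := by
    rwa [nhdsWithin_eq_nhds.2 (closedBall_mem_nhds w₀ hρ)] at hv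
  obtain ⟨r₁, hr₁, hr₁b⟩ := Metric.mem_nhds_iff.1 hv'
  -- Step D : smallness of K u₀ w for w near w₀
  have hKat : ContinuousAt (K u₀) w₀ :=
    ((h2 u₀ hu₀).differentiableAt (hV.mem_nhds hw₀)).continuousAt
  have hKsm : ∀ᶠ w in 𝓝 w₀, ‖K u₀ w‖ < ‖c‖ * δ / 2 := by
    have h0 : Tendsto (K u₀) (𝓝 w₀) (𝓝 0) := by rw [← hK0]; exact hKat.tendsto
    have h0' : Tendsto (fun w => ‖K u₀ w‖) (𝓝 w₀) (𝓝 0) := by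
      simpa using h0.norm
    exact h0'.eventually_lt_const (div_pos (mul_pos hcpos hδ) (by norm_num))
  obtain ⟨r₂, hr₂, hr₂b⟩ := Metric.eventually_nhds_iff_ball.1 hKsm
  -- the final radius
  set r : ℝ := min r₁ (min r₂ ρ) with hrdef
  have hr : 0 < r := lt_min hr₁ (lt_min hr₂ hρ)
  set s : Set ℂ := ball w₀ r with hsdef
  have hsρ : s ⊆ closedBall w₀ ρ := by
    refine subset_trans (ball_subset_ball ?_) ball_subset_closedBall
    exact le_trans (min_le_right _ _) (min_le_right _ _)
  have hsV : s ⊆ V := subset_trans hsρ hVρ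
  -- contraction bound for the derivative of Φ in u
  have hderivΦ : ∀ w ∈ s, ∀ u ∈ closedBall u₀ δ, ‖1 - c⁻¹ * D u w‖ ≤ 1 / 2 := by
    intro w hw u hu
    have hwv : w ∈ v := hr₁b (ball_subset_ball (min_le_left _ _) hw)
    have hDuw : ‖D u w - D u w₀‖ ≤ ‖c‖ / 4 := by
      have hcb : closedBall u (ρ / 2) ⊆ closedBall u₀ ρ := by
        intro x hx
        rw [mem_closedBall] at hx ⊢
        have := mem_closedBall.1 hu
        calc dist x u₀ ≤ dist x u + dist u u₀ := dist_triangle _ _ _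
          _ ≤ ρ / 2 + δ := add_le_add hx this
          _ ≤ ρ := by linarith
      have hgd : DifferentiableOn ℂ (fun z => K z w - K z w₀) (closedBall u (ρ / 2)) :=
        (((h1 w (hsV hw)).mono (subset_trans hcb hΩρ)).sub
          ((h1 w₀ hw₀).mono (subset_trans hcb hΩρ)))
      have hsb : ∀ z ∈ sphere u (ρ / 2), ‖K z w - K z w₀‖ ≤ ρ * ‖c‖ / 8 := by
        intro z hz
        have hz' : z ∈ closedBall u₀ ρ := hcb (sphere_subset_closedBall hz)
        have := hvp w hwv z hz'
        rw [← dist_eq_norm]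
        exact this.le
      have hder := deriv_diff_bound (by linarith : (0:ℝ) < ρ / 2) hgd hsb
      have huΩ : u ∈ Ω := hΩρ (hδΩ hu)
      have hds : deriv (fun z => K z w - K z w₀) u = D u w - D u w₀ :=
        deriv_fun_sub ((h1 w (hsV hw)).differentiableAt (hΩ.mem_nhds huΩ))
          ((h1 w₀ hw₀).differentiableAt (hΩ.mem_nhds huΩ))
      rw [hds] at hder
      refine hder.trans ?_
      rw [div_le_iff₀ (by linarith : (0:ℝ) < ρ / 2)]
      ring_nf
      nlinarith [hcpos, hρ]
    have : ‖1 - c⁻¹ * D u w‖ = ‖c‖⁻¹ * ‖c - D u w‖ := by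
      rw [← norm_inv, ← norm_mul, mul_sub, inv_mul_cancel₀ hcne]
    rw [this]
    have hcd : ‖c - D u w‖ ≤ ‖c‖ / 2 := by
      calc ‖c - D u w‖ ≤ ‖c - D u w₀‖ + ‖D u w₀ - D u w‖ :=
            norm_sub_le_norm_sub_add_norm_sub c (D u w₀) (D u w)
        _ ≤ ‖c‖ / 4 + ‖c‖ / 4 := by
            refine add_le_add ?_ ?_
            · rw [norm_sub_rev]; exact hDδ u hu
            · rw [norm_sub_rev]; exact hDuw
        _ = ‖c‖ / 2 := by ring
    calc ‖c‖⁻¹ * ‖c - D u w‖ ≤ ‖c‖⁻¹ * (‖c‖ / 2) :=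
          mul_le_mul_of_nonneg_left hcd (by positivity)
      _ = 1 / 2 := by
          rw [div_eq_mul_inv, ← mul_assoc, inv_mul_cancel₀ (ne_of_gt hcpos), one_mul, one_div]
  -- Lipschitz property of Φ in u
  have hΦderiv : ∀ w ∈ s, ∀ x ∈ closedBall u₀ δ,
      HasDerivWithinAt (fun u => Φ u w) (1 - c⁻¹ * D x w) (closedBall u₀ δ) x := by
    intro w hw x hx
    have hdiff : DifferentiableAt ℂ (fun z => K z w) x :=
      (h1 w (hsV hw)).differentiableAt (hΩ.mem_nhds (hΩρ (hδΩ hx)))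
    have hKder : HasDerivAt (fun z => K z w) (D x w) x := hdiff.hasDerivAt
    have := (hasDerivAt_id x).fun_sub ((hKder.const_mul (c⁻¹)))
    simpa [hΦdef] using this.hasDerivWithinAt
  have hlip : ∀ w ∈ s, ∀ x ∈ closedBall u₀ δ, ∀ y ∈ closedBall u₀ δ,
      ‖Φ y w - Φ x w‖ ≤ (1 / 2) * ‖y - x‖ := by
    intro w hw x hx y hy
    exact (convex_closedBall u₀ δ).norm_image_sub_le_of_norm_hasDerivWithin_le
      (fun z hz => hΦderiv w hw z hz) (fun z hz => hderivΦ w hw z hz) hx hy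
  -- smallness of the first step
  have hstep0 : ∀ w ∈ s, ‖Φ u₀ w - u₀‖ ≤ δ / 2 := by
    intro w hw
    have hwr₂ : w ∈ ball w₀ r₂ :=
      ball_subset_ball (le_trans (min_le_right _ _) (min_le_left _ _)) hw
    have := (hr₂b w hwr₂).le
    have heq : Φ u₀ w - u₀ = -(c⁻¹ * K u₀ w) := by simp [hΦdef]
    rw [heq, norm_neg, norm_mul, norm_inv]
    calc ‖c‖⁻¹ * ‖K u₀ w‖ ≤ ‖c‖⁻¹ * (‖c‖ * δ / 2) :=
          mul_le_mul_of_nonneg_left this (by positivity)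
      _ = δ / 2 := by
          rw [show ‖c‖ * δ / 2 = ‖c‖ * (δ / 2) by ring, ← mul_assoc,
            inv_mul_cancel₀ (ne_of_gt hcpos), one_mul]
  -- Φ(·, w) maps the closed δ-ball into itself
  have hself : ∀ w ∈ s, ∀ u ∈ closedBall u₀ δ, Φ u w ∈ closedBall u₀ δ := by
    intro w hw u hu
    rw [mem_closedBall, dist_eq_norm]
    calc ‖Φ u w - u₀‖ ≤ ‖Φ u w - Φ u₀ w‖ + ‖Φ u₀ w - u₀‖ :=
          norm_sub_le_norm_sub_add_norm_sub _ _ _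
      _ ≤ (1 / 2) * ‖u - u₀‖ + δ / 2 := by
          refine add_le_add (hlip w hw u₀ (mem_closedBall_self hδ.le) u hu) (hstep0 w hw)
      _ ≤ (1 / 2) * δ + δ / 2 := by
          have := mem_closedBall_iff_norm.1 hu
          nlinarith
      _ = δ := by ring
  -- the Picard iterates
  set βseq : ℕ → ℂ → ℂ := fun n => Nat.rec (fun _ => u₀) (fun _ ih w => Φ (ih w) w) n
    with hβseq
  have hβ0 : βseq 0 = fun _ => u₀ := rfl
  have hβS : ∀ n, βseq (n + 1) = fun w => Φ (βseq n w) w := fun n => rfl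
  -- membership
  have hmem : ∀ n, ∀ w ∈ s, βseq n w ∈ closedBall u₀ δ := by
    intro n
    induction n with
    | zero => intro w hw; exact mem_closedBall_self hδ.le
    | succ n ih =>
        intro w hw
        rw [hβS]
        exact hself w hw _ (ih w hw)
  -- differentiability
  have hdiff : ∀ n, DifferentiableOn ℂ (βseq n) s := by
    intro n
    induction n with
    | zero => rw [hβ0]; exact differentiableOn_const u₀
    | succ n ih =>
        rw [hβS]
        have hcomp : DifferentiableOn ℂ (fun w => K (βseq n w) w) s := by
          have := hKd.comp (DifferentiableOn.prodMk ih (differentiableOn_id)) ?_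
          · exact this
          · intro w hw
            exact ⟨hΩρ (hδΩ (hmem n w hw)), hsV hw⟩
        simpa [hΦdef] using ih.fun_sub ((differentiableOn_const (c⁻¹)).fun_mul hcomp)
  -- geometric decay
  have hgeo : ∀ w ∈ s, ∀ n, dist (βseq n w) (βseq (n + 1) w) ≤ (δ / 2) * (1 / 2) ^ n := by
    intro w hw n
    induction n with
    | zero =>
        have e : dist (βseq 0 w) (βseq (0 + 1) w) = ‖Φ u₀ w - u₀‖ := by
          rw [dist_eq_norm, norm_sub_rev]; rfl
        rw [e]
        simpa using hstep0 w hw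
    | succ n ih =>
        have e1 : βseq (n + 1) w = Φ (βseq n w) w := rfl
        have e2 : βseq (n + 1 + 1) w = Φ (βseq (n + 1) w) w := rfl
        rw [dist_eq_norm, norm_sub_rev, e1, e2]
        calc ‖Φ (βseq (n+1) w) w - Φ (βseq n w) w‖
            ≤ (1 / 2) * ‖βseq (n+1) w - βseq n w‖ :=
              hlip w hw _ (hmem n w hw) _ (hmem (n+1) w hw)
          _ ≤ (1 / 2) * ((δ / 2) * (1 / 2) ^ n) := by
              rw [← dist_eq_norm, dist_comm]
              exact mul_le_mul_of_nonneg_left ih (by norm_num)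
          _ = (δ / 2) * (1 / 2) ^ (n + 1) := by ring
  -- the limit function
  set βlim : ℂ → ℂ := fun w => limUnder atTop (fun n => βseq n w) with hβlim
  have hcauchy : ∀ w ∈ s, CauchySeq (fun n => βseq n w) := by
    intro w hw
    exact cauchySeq_of_le_geometric (1/2) (δ/2) (by norm_num) (hgeo w hw)
  have htends : ∀ w ∈ s, Tendsto (fun n => βseq n w) atTop (𝓝 (βlim w)) := by
    intro w hw
    exact (hcauchy w hw).tendsto_limUnder
  have hdistlim : ∀ w ∈ s, ∀ n, dist (βseq n w) (βlim w) ≤ δ * (1 / 2) ^ n := by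
    intro w hw n
    have := dist_le_of_le_geometric_of_tendsto (1/2) (δ/2) (by norm_num)
      (hgeo w hw) (htends w hw) n
    calc dist (βseq n w) (βlim w) ≤ δ / 2 * (1 / 2) ^ n / (1 - 1 / 2) := this
      _ = δ * (1 / 2) ^ n := by ring
  -- uniform convergence
  have hunif : TendstoUniformlyOn βseq βlim atTop s := by
    rw [Metric.tendstoUniformlyOn_iff]
    intro ε hε
    have htend0 : Tendsto (fun n : ℕ => δ * (1 / 2) ^ n) atTop (𝓝 0) := by
      have := tendsto_pow_atTop_nhds_zero_of_lt_one (by norm_num : (0:ℝ) ≤ 1/2)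
        (by norm_num : (1:ℝ)/2 < 1)
      simpa using this.const_mul δ
    filter_upwards [htend0.eventually_lt_const hε] with n hn w hw
    calc dist (βlim w) (βseq n w) = dist (βseq n w) (βlim w) := dist_comm _ _
      _ ≤ δ * (1 / 2) ^ n := hdistlim w hw n
      _ < ε := hn
  have hβdiff : DifferentiableOn ℂ βlim s :=
    (hunif.tendstoLocallyUniformlyOn).differentiableOn
      (Eventually.of_forall hdiff) isOpen_ball
  -- membership of the limit
  have hβmem : ∀ w ∈ s, βlim w ∈ closedBall u₀ δ := by
    intro w hw
    exact IsClosed.mem_of_tendsto Metric.isClosed_closedBall (htends w hw)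
      (Eventually.of_forall fun n => hmem n w hw)
  -- value at w₀
  have hw₀s : w₀ ∈ s := mem_ball_self hr
  have hβconst : ∀ n, βseq n w₀ = u₀ := by
    intro n
    induction n with
    | zero => rfl
    | succ n ih =>
        rw [hβS]
        simp only [ih, hΦdef, hK0]
        ring
  have hβw₀ : βlim w₀ = u₀ := by
    have h₁ : Tendsto (fun n => βseq n w₀) atTop (𝓝 (βlim w₀)) := htends w₀ hw₀s
    have h₂ : Tendsto (fun n => βseq n w₀) atTop (𝓝 u₀) := by
      simp only [hβconst]
      exact tendsto_const_nhds
    exact tendsto_nhds_unique h₁ h₂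
  -- fixed point property
  have hfix : ∀ w ∈ s, K (βlim w) w = 0 := by
    intro w hw
    have hβΩ : βlim w ∈ Ω := hΩρ (hδΩ (hβmem w hw))
    have hΦcont : ContinuousAt (fun u => Φ u w) (βlim w) := by
      have : ContinuousAt (fun u => K u w) (βlim w) :=
        ((h1 w (hsV hw)).differentiableAt (hΩ.mem_nhds hβΩ)).continuousAt
      exact continuousAt_id.sub (continuousAt_const.mul this)
    have h₁ : Tendsto (fun n => βseq (n + 1) w) atTop (𝓝 (βlim w)) :=
      (htends w hw).comp (tendsto_add_atTop_nat 1)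
    have h₂ : Tendsto (fun n => βseq (n + 1) w) atTop (𝓝 (Φ (βlim w) w)) := by
      have : Tendsto (fun n => Φ (βseq n w) w) atTop (𝓝 (Φ (βlim w) w)) :=
        hΦcont.tendsto.comp (htends w hw)
      simpa only [hβS] using this
    have hΦfix : Φ (βlim w) w = βlim w := tendsto_nhds_unique h₂ h₁
    have : c⁻¹ * K (βlim w) w = 0 := by
      have := hΦfix
      simp only [hΦdef] at this
      linear_combination -this
    have hcinv : c⁻¹ ≠ 0 := inv_ne_zero hcne
    exact (mul_eq_zero.1 this).resolve_left hcinv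
  exact ⟨r, hr, hsV, βlim, hβw₀,
    fun w hw => ⟨hΩρ (hδΩ (hβmem w hw)), hfix w hw⟩, hβdiff⟩


/-- an antiholomorphic implicit function theorem for a kernel holomorphic in
the first variable and antiholomorphic in the second. -/
theorem antiholomorphic_implicit_function
    (U V : Set ℂ) (hU : IsOpen U) (hV : IsOpen V)
    (F : ℂ → ℂ → ℂ)
    (hcont : ContinuousOn (fun p : ℂ × ℂ => F p.1 p.2) (U ×ˢ V))
    (hholo : ∀ w ∈ V, DifferentiableOn ℂ (fun z => F z w) U)
    (hanti : ∀ z ∈ U, DifferentiableOn ℂ (fun w => conj (F z w)) V)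
    (z₀ w₀ : ℂ) (hz₀ : z₀ ∈ U) (hw₀ : w₀ ∈ V)
    (hF0 : F z₀ w₀ = 0) (hdF : deriv (fun z => F z w₀) z₀ ≠ 0) :
    ∃ r > 0, Metric.ball w₀ r ⊆ V ∧ ∃ α : ℂ → ℂ, α w₀ = z₀ ∧
      (∀ w ∈ Metric.ball w₀ r, α w ∈ U ∧ F (α w) w = 0) ∧
      DifferentiableOn ℂ (fun w => conj (α w)) (Metric.ball w₀ r) := by
  set Ω : Set ℂ := (fun u : ℂ => (starRingEnd ℂ) u) ⁻¹' U with hΩdef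
  have hΩ : IsOpen Ω := hU.preimage continuous_conj
  set K : ℂ → ℂ → ℂ := fun u w => (starRingEnd ℂ) (F ((starRingEnd ℂ) u) w) with hKdef
  have hKc : ContinuousOn (fun p : ℂ × ℂ => K p.1 p.2) (Ω ×ˢ V) := by
    have hmap : Continuous (fun p : ℂ × ℂ => ((starRingEnd ℂ) p.1, p.2)) :=
      (continuous_conj.comp continuous_fst).prodMk continuous_snd
    have : ContinuousOn (fun p : ℂ × ℂ => F ((starRingEnd ℂ) p.1) p.2) (Ω ×ˢ V) := by
      refine hcont.comp hmap.continuousOn ?_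
      rintro ⟨u, w⟩ ⟨hu, hw⟩
      exact ⟨hu, hw⟩
    exact continuous_conj.comp_continuousOn this
  have h1 : ∀ w ∈ V, DifferentiableOn ℂ (fun u => K u w) Ω := by
    intro w hw u hu
    have hFd : DifferentiableAt ℂ (fun z => F z w) ((starRingEnd ℂ) u) :=
      (hholo w hw).differentiableAt (hU.mem_nhds hu)
    have := hasDerivAt_conj_comp (hFd.hasDerivAt)
    exact this.differentiableAt.differentiableWithinAt
  have h2 : ∀ u ∈ Ω, DifferentiableOn ℂ (K u) V := fun u hu => hanti _ hu
  have hu₀ : (starRingEnd ℂ) z₀ ∈ Ω := by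
    simp only [hΩdef, mem_preimage, Complex.conj_conj]
    exact hz₀
  have hK0 : K ((starRingEnd ℂ) z₀) w₀ = 0 := by
    simp only [hKdef, Complex.conj_conj, hF0, map_zero]
  have hcne : deriv (fun u => K u w₀) ((starRingEnd ℂ) z₀) ≠ 0 := by
    have hFd : DifferentiableAt ℂ (fun z => F z w₀) z₀ :=
      (hholo w₀ hw₀).differentiableAt (hU.mem_nhds hz₀)
    have hFd' : HasDerivAt (fun z => F z w₀) (deriv (fun z => F z w₀) z₀)
        ((starRingEnd ℂ) ((starRingEnd ℂ) z₀)) := by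
      rw [Complex.conj_conj]
      exact hFd.hasDerivAt
    have hKder := hasDerivAt_conj_comp hFd'
    rw [hKder.deriv]
    simpa using hdF
  obtain ⟨r, hr, hrV, β, hβw₀, hβprop, hβdiff⟩ :=
    holomorphic_implicit hΩ hV hKc h1 h2 hu₀ hw₀ hK0 hcne
  refine ⟨r, hr, hrV, fun w => (starRingEnd ℂ) (β w), ?_, ?_, ?_⟩
  · show (starRingEnd ℂ) (β w₀) = z₀
    rw [hβw₀, Complex.conj_conj]
  · intro w hw
    obtain ⟨hm, hz⟩ := hβprop w hw
    refine ⟨hm, ?_⟩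
    have := congrArg (starRingEnd ℂ) hz
    simpa only [hKdef, Complex.conj_conj, map_zero] using this
  · simpa only [Complex.conj_conj] using hβdiff

end
end

section
/- Let U, W ⊆ ℂ be open sets and let F : U × W → ℂ be continuous, such that for each w ∈ W the function z ↦ F(z,w) is holomorphic on U. Let z₀ ∈ U and w₀ ∈ W, suppose z ↦ F(z,w₀) is not identically zero on any neighborhood of z₀, and let m be the order of vanishing of z ↦ F(z,w₀) at z₀. Then for every ε > 0 such that the closed disc of radius ε about z₀ is contained in U and z₀ is the only zero of z ↦ F(z,w₀) in that closed disc, there exists δ > 0 such that for every w with |w − w₀| < δ, the function z ↦ F(z,w) has no zeros on the circle |z − z₀| = ε and the sum of the orders of vanishing of z ↦ F(z,w) over its zeros in the open disc of radius ε about z₀ equals m. -/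
open MeasureTheory Complex Set Metric ComplexConjugate Filter

open scoped Topology Real

noncomputable section



/-- f analytic on ball c R', nonzero somewhere: no point has f eventually zero. -/
lemma aux_not_eventually_zero {c : ℂ} {R' : ℝ} {f : ℂ → ℂ}
    (hf : DifferentiableOn ℂ f (ball c R'))
    {z₁ : ℂ} (hz₁ : z₁ ∈ ball c R') (hfz₁ : f z₁ ≠ 0) :
    ∀ z ∈ ball c R', ¬ (∀ᶠ ζ in 𝓝 z, f ζ = 0) := by
  intro z hz hev
  have hA : AnalyticOnNhd ℂ f (ball c R') := hf.analyticOnNhd isOpen_ball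
  have := hA.eqOn_zero_of_preconnected_of_eventuallyEq_zero
    (convex_ball c R').isPreconnected hz hev
  exact hfz₁ (this hz₁)

/-- finiteness of zeros in closed ball -/
lemma aux_zeros_finite {c : ℂ} {R R' : ℝ} (hR : 0 < R) (hRR' : R < R') {f : ℂ → ℂ}
    (hf : DifferentiableOn ℂ f (ball c R'))
    (hsph : ∀ z ∈ sphere c R, f z ≠ 0) :
    {z | z ∈ ball c R ∧ f z = 0}.Finite := by
  by_contra hinf
  rw [← Set.not_infinite, not_not] at hinf
  have hsub : {z | z ∈ ball c R ∧ f z = 0} ⊆ closedBall c R :=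
    fun z hz => ball_subset_closedBall hz.1
  obtain ⟨x, hxK, hx⟩ := hinf.exists_accPt_of_subset_isCompact
    (isCompact_closedBall c R) hsub
  have hxball : x ∈ ball c R' := lt_of_le_of_lt (mem_closedBall.1 hxK) hRR'
  -- f is frequently zero in punctured nbhd of x
  have hfreq : ∃ᶠ z in 𝓝[≠] x, f z = 0 := by
    have h1 := accPt_iff_frequently.1 hx
    rw [frequently_nhdsWithin_iff]
    exact h1.mono fun z hz => ⟨hz.2.2, hz.1⟩
  have hA : AnalyticOnNhd ℂ f (ball c R') := hf.analyticOnNhd isOpen_ball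
  have heq := hA.eqOn_zero_of_preconnected_of_frequently_eq_zero
    (convex_ball c R').isPreconnected hxball hfreq
  obtain ⟨w, hw⟩ : (sphere c R).Nonempty := NormedSpace.sphere_nonempty.mpr hR.le
  exact hsph w hw (heq (by
    have : w ∈ closedBall c R := sphere_subset_closedBall hw
    exact lt_of_le_of_lt (mem_closedBall.1 this) hRR'))


lemma aux_circle_integral_add {f g : ℂ → ℂ} {c : ℂ} {R : ℝ}
    (hf : CircleIntegrable f c R) (hg : CircleIntegrable g c R) :
    (∮ z in C(c, R), (f z + g z)) = (∮ z in C(c, R), f z) + ∮ z in C(c, R), g z := by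
  simp only [circleIntegral, smul_add, intervalIntegral.integral_add hf.out hg.out]

lemma aux_arg_principle (c : ℂ) (R R' : ℝ) (hR : 0 < R) (hRR' : R < R') :
    ∀ (k : ℕ) (f : ℂ → ℂ),
      DifferentiableOn ℂ f (ball c R') →
      (∀ z ∈ sphere c R, f z ≠ 0) →
      ∀ (hfin : {z | z ∈ ball c R ∧ f z = 0}.Finite), hfin.toFinset.card ≤ k →
      ∃ (Z : Finset ℂ) (ord : ℂ → ℕ),
        (∀ z, z ∈ Z ↔ z ∈ ball c R ∧ f z = 0) ∧
        (∀ z ∈ Z, ∃ u : ℂ → ℂ, AnalyticAt ℂ u z ∧ u z ≠ 0 ∧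
          ∀ᶠ ζ in 𝓝 z, f ζ = (ζ - z) ^ (ord z) * u ζ) ∧
        (∮ z in C(c, R), deriv f z / f z) = (2 * π * I) * (∑ z ∈ Z, (ord z : ℂ)) := by
  intro k
  induction k with
  | zero =>
    intro f hf hsph hfin hcard
    -- zero set is empty
    have hempty : {z | z ∈ ball c R ∧ f z = 0} = ∅ := by
      have := Finset.card_eq_zero.1 (Nat.le_zero.1 hcard)
      rwa [Set.Finite.toFinset_eq_empty] at this
    refine ⟨∅, fun _ => 0, ?_, by simp, ?_⟩
    · intro z
      simp only [Finset.notMem_empty, false_iff]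
      intro hz
      exact Set.eq_empty_iff_forall_notMem.1 hempty z hz
    · have hball' : closedBall c R ⊆ ball c R' :=
        (closedBall_subset_ball hRR')
      have hA : AnalyticOnNhd ℂ f (ball c R') := hf.analyticOnNhd isOpen_ball
      have hne : ∀ z ∈ closedBall c R, f z ≠ 0 := by
        intro z hz
        rcases lt_or_eq_of_le (mem_closedBall.1 hz) with h | h
        · intro h0
          exact Set.eq_empty_iff_forall_notMem.1 hempty z ⟨mem_ball.2 h, h0⟩
        · exact hsph z (mem_sphere.2 h)
      have hderiv_cont : ContinuousOn (deriv f) (closedBall c R) :=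
        (hA.deriv.continuousOn).mono hball'
      have hcont : ContinuousOn (fun z => deriv f z / f z) (closedBall c R) :=
        hderiv_cont.div ((hf.continuousOn).mono hball') hne
      have hzero : (∮ z in C(c, R), deriv f z / f z) = 0 := by
        refine circleIntegral_eq_zero_of_differentiable_on_off_countable hR.le
          Set.countable_empty hcont ?_
        intro z hz
        have hz' : z ∈ ball c R' := ball_subset_ball hRR'.le hz.1
        exact ((hA.deriv z hz').differentiableAt).div
          ((hf.differentiableAt (isOpen_ball.mem_nhds hz')))
          (hne z (ball_subset_closedBall hz.1))
      simp [hzero]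
  | succ k IH =>
    intro f hf hsph hfin hcard
    by_cases hemp : hfin.toFinset = ∅
    · -- same as base case: zero set empty
      exact IH f hf hsph hfin (by rw [hemp, Finset.card_empty]; exact Nat.zero_le _)
    · obtain ⟨a, ha_fin⟩ := Finset.nonempty_iff_ne_empty.2 hemp
      have ha_mem := (Set.Finite.mem_toFinset hfin).1 ha_fin
      obtain ⟨haball, hfa⟩ := ha_mem
      have haball' : a ∈ ball c R' := ball_subset_ball hRR'.le haball
      have hA : AnalyticOnNhd ℂ f (ball c R') := hf.analyticOnNhd isOpen_ball
      obtain ⟨w₁, hw₁⟩ : (sphere c R).Nonempty := NormedSpace.sphere_nonempty.mpr hR.le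
      have hsub : sphere c R ⊆ ball c R' := fun z hz =>
        mem_ball.2 (lt_of_le_of_lt (le_of_eq (mem_sphere.1 hz)) hRR')
      have hw₁ball : w₁ ∈ ball c R' := hsub hw₁
      have hnotev : ¬ (∀ᶠ ζ in 𝓝 a, f ζ = 0) :=
        aux_not_eventually_zero hf hw₁ball (hsph w₁ hw₁) a haball'
      have ha : AnalyticAt ℂ f a := hA a haball'
      have horder : analyticOrderAt f a ≠ ⊤ := fun htop => hnotev (analyticOrderAt_eq_top.1 htop)
      have hn : analyticOrderAt f a = ((analyticOrderAt f a).toNat : ℕ∞) := (ENat.coe_toNat_eq_self.2 horder).symm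
      set n := (analyticOrderAt f a).toNat with hn_def
      obtain ⟨u, hu_an, hu_ne, hu_ev⟩ := (ha.analyticOrderAt_eq_natCast (n := n)).1 hn
      have hn0 : n ≠ 0 := by
        intro he
        have h1 : f a = (a - a) ^ n * u a := hu_ev.self_of_nhds
        rw [he, hfa] at h1
        simp at h1
        exact hu_ne h1.symm
      have hn1 : 1 ≤ n := Nat.one_le_iff_ne_zero.2 hn0
      set h : ℂ → ℂ := fun z => if z = a then u a else f z / (z - a) ^ n with hh_def
      have hh_a : h a = u a := if_pos rfl
      have hh_ne : ∀ z, z ≠ a → h z = f z / (z - a) ^ n := fun z hz => if_neg hz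
      have hfh : ∀ z, f z = (z - a) ^ n * h z := by
        intro z
        by_cases hz : z = a
        · subst hz; rw [hfa, hh_a, sub_self, zero_pow hn0, zero_mul]
        · have hpow : (z - a) ^ n ≠ 0 := pow_ne_zero _ (sub_ne_zero.2 hz)
          rw [hh_ne z hz]; field_simp
      have hh_eq_u : h =ᶠ[𝓝 a] u := by
        filter_upwards [hu_ev] with z hz
        by_cases hza : z = a
        · subst hza; exact hh_a
        · have hpow : (z - a) ^ n ≠ 0 := pow_ne_zero _ (sub_ne_zero.2 hza)
          rw [hh_ne z hza, hz, smul_eq_mul]; field_simp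
      have hh_an_a : AnalyticAt ℂ h a := hu_an.congr hh_eq_u.symm
      have hh_diff : DifferentiableOn ℂ h (ball c R') := by
        intro z hz
        by_cases hza : z = a
        · subst hza; exact hh_an_a.differentiableAt.differentiableWithinAt
        · have hd : DifferentiableAt ℂ (fun ζ => f ζ / (ζ - a) ^ n) z :=
            (hf.differentiableAt (isOpen_ball.mem_nhds hz)).div
              ((differentiableAt_id.sub_const a).pow n)
              (pow_ne_zero _ (sub_ne_zero.2 hza))
          have hev : h =ᶠ[𝓝 z] (fun ζ => f ζ / (ζ - a) ^ n) := by
            filter_upwards [isOpen_ne.mem_nhds hza] with ζ hζ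
            exact hh_ne ζ hζ
          exact (hd.congr_of_eventuallyEq hev).differentiableWithinAt
      have ha_ne_sphere : ∀ z ∈ sphere c R, z ≠ a := by
        intro z hz hza
        subst hza
        exact absurd (mem_sphere.1 hz) (ne_of_lt (mem_ball.1 haball))
      have hh_sph : ∀ z ∈ sphere c R, h z ≠ 0 := by
        intro z hz
        rw [hh_ne z (ha_ne_sphere z hz)]
        exact div_ne_zero (hsph z hz) (pow_ne_zero _ (sub_ne_zero.2 (ha_ne_sphere z hz)))
      have hh_zero_iff : ∀ z, z ≠ a → (h z = 0 ↔ f z = 0) := by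
        intro z hza
        rw [hh_ne z hza, div_eq_zero_iff]
        have : (z - a) ^ n ≠ 0 := pow_ne_zero _ (sub_ne_zero.2 hza)
        tauto
      have hfin' : {z | z ∈ ball c R ∧ h z = 0}.Finite := by
        apply hfin.subset
        rintro z ⟨hzb, hhz⟩
        have hza : z ≠ a := by
          rintro rfl
          rw [hh_a] at hhz
          exact hu_ne hhz
        exact ⟨hzb, (hh_zero_iff z hza).1 hhz⟩
      have htof : hfin'.toFinset = hfin.toFinset.erase a := by
        ext z
        rw [Set.Finite.mem_toFinset, Finset.mem_erase, Set.Finite.mem_toFinset]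
        constructor
        · rintro ⟨hzb, hhz⟩
          have hza : z ≠ a := by
            rintro rfl
            rw [hh_a] at hhz
            exact hu_ne hhz
          exact ⟨hza, hzb, (hh_zero_iff z hza).1 hhz⟩
        · rintro ⟨hza, hzb, hfz⟩
          exact ⟨hzb, (hh_zero_iff z hza).2 hfz⟩
      obtain ⟨Z', ord', hiff', hfact', hint'⟩ := IH h hh_diff hh_sph hfin' (by
        rw [htof, Finset.card_erase_of_mem ha_fin]
        omega)
      have haZ' : a ∉ Z' := by
        intro hmem
        have := ((hiff' a).1 hmem).2
        rw [hh_a] at this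
        exact hu_ne this
      refine ⟨insert a Z', Function.update ord' a n, ?_, ?_, ?_⟩
      · intro z
        rw [Finset.mem_insert]
        constructor
        · rintro (rfl | hz)
          · exact ⟨haball, hfa⟩
          · obtain ⟨hzb, hhz⟩ := (hiff' z).1 hz
            have hza : z ≠ a := fun e => haZ' (e ▸ hz)
            exact ⟨hzb, (hh_zero_iff z hza).1 hhz⟩
        · rintro ⟨hzb, hfz⟩
          by_cases hza : z = a
          · exact Or.inl hza
          · exact Or.inr ((hiff' z).2 ⟨hzb, (hh_zero_iff z hza).2 hfz⟩)
      · intro z hz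
        rcases Finset.mem_insert.1 hz with rfl | hzZ'
        · exact ⟨u, hu_an, hu_ne, by rw [Function.update_self]; exact hu_ev⟩
        · have hza : z ≠ a := fun e => haZ' (e ▸ hzZ')
          obtain ⟨v, hv_an, hv_ne, hv_ev⟩ := hfact' z hzZ'
          refine ⟨fun ζ => (ζ - a) ^ n * v ζ, ?_, ?_, ?_⟩
          · exact ((analyticAt_id.sub analyticAt_const).pow n).mul hv_an
          · exact mul_ne_zero (pow_ne_zero _ (sub_ne_zero.2 hza)) hv_ne
          · rw [Function.update_of_ne hza]
            filter_upwards [hv_ev] with ζ hζ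
            rw [hfh ζ, hζ]
            ring
      · have hEq : Set.EqOn (fun z => deriv f z / f z)
            (fun z => (n : ℂ) * (z - a)⁻¹ + deriv h z / h z) (sphere c R) := by
          intro z hz
          have hza : z ≠ a := ha_ne_sphere z hz
          have hzball' : z ∈ ball c R' := hsub hz
          have hdh : DifferentiableAt ℂ h z :=
            hh_diff.differentiableAt (isOpen_ball.mem_nhds hzball')
          have hdp : HasDerivAt (fun ζ : ℂ => (ζ - a) ^ n)
              ((n : ℂ) * (z - a) ^ (n - 1) * 1) z :=
            ((hasDerivAt_id z).sub_const a).pow n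
          have hfeq : f = fun ζ => (ζ - a) ^ n * h ζ := funext hfh
          have hderiv : deriv f z
              = (n : ℂ) * (z - a) ^ (n - 1) * h z + (z - a) ^ n * deriv h z := by
            conv_lhs => rw [hfeq]
            rw [deriv_fun_mul hdp.differentiableAt hdh, hdp.deriv]
            ring
          have hAz : (z - a) ≠ 0 := sub_ne_zero.2 hza
          have hHz : h z ≠ 0 := hh_sph z hz
          have hpow : (z - a) ^ n = (z - a) ^ (n - 1) * (z - a) := by
            rw [← pow_succ]
            congr 1
            omega
          have hB : (z - a) ^ (n - 1) ≠ 0 := pow_ne_zero _ hAz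
          show deriv f z / f z = (n : ℂ) * (z - a)⁻¹ + deriv h z / h z
          rw [hderiv, hfh z, hpow]
          field_simp
        have hInt1 : CircleIntegrable (fun z => (n : ℂ) * (z - a)⁻¹) c R := by
          apply ContinuousOn.circleIntegrable hR.le
          exact continuousOn_const.mul (((continuousOn_id.sub continuousOn_const)).inv₀
            (fun z hz => sub_ne_zero.2 (ha_ne_sphere z hz)))
        have hh_an : AnalyticOnNhd ℂ h (ball c R') := hh_diff.analyticOnNhd isOpen_ball
        have hInt2 : CircleIntegrable (fun z => deriv h z / h z) c R := by
          apply ContinuousOn.circleIntegrable hR.le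
          exact ((hh_an.deriv.continuousOn).mono hsub).div
            ((hh_an.continuousOn).mono hsub) hh_sph
        have hint1val : (∮ z in C(c, R), (n : ℂ) * (z - a)⁻¹) = (n : ℂ) * (2 * π * I) := by
          have heq : (fun z : ℂ => (n : ℂ) * (z - a)⁻¹) = fun z => (n : ℂ) • (z - a)⁻¹ := by
            funext z; rw [smul_eq_mul]
          rw [heq, circleIntegral.integral_smul,
            circleIntegral.integral_sub_inv_of_mem_ball haball, smul_eq_mul]
        calc (∮ z in C(c, R), deriv f z / f z)
            = ∮ z in C(c, R), ((n : ℂ) * (z - a)⁻¹ + deriv h z / h z) :=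
              circleIntegral.integral_congr hR.le hEq
          _ = (∮ z in C(c, R), (n : ℂ) * (z - a)⁻¹)
              + ∮ z in C(c, R), deriv h z / h z := aux_circle_integral_add hInt1 hInt2
          _ = (n : ℂ) * (2 * π * I) + (2 * π * I) * ∑ z ∈ Z', (ord' z : ℂ) := by
              rw [hint1val, hint']
          _ = (2 * π * I) * (∑ z ∈ insert a Z', ((Function.update ord' a n z : ℕ) : ℂ)) := by
              rw [Finset.sum_insert haZ', Function.update_self]
              have hsum : ∑ z ∈ Z', ((Function.update ord' a n z : ℕ) : ℂ)
                  = ∑ z ∈ Z', ((ord' z : ℕ) : ℂ) :=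
                Finset.sum_congr rfl (fun b hb => by
                  rw [Function.update_of_ne (ne_of_mem_of_not_mem hb haZ')])
              rw [hsum]
              ring


set_option maxHeartbeats 1000000 in
lemma aux_deriv_jointly_continuous
    (U W : Set ℂ) (hU : IsOpen U) (hW : IsOpen W) (F : ℂ → ℂ → ℂ)
    (hcont : ContinuousOn (fun p : ℂ × ℂ => F p.1 p.2) (U ×ˢ W))
    (hholo : ∀ w ∈ W, DifferentiableOn ℂ (fun z => F z w) U)
    (B : Set ℂ) (hB : IsOpen B) (r : ℝ) (hr : 0 < r)
    (hBU : ∀ z ∈ B, closedBall z r ⊆ U) :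
    ContinuousOn (fun p : ℂ × ℂ => deriv (fun z => F z p.2) p.1) (B ×ˢ W) := by
  set g : (ℂ × ℂ) → ℝ → ℂ := fun p θ =>
    (circleMap 0 r θ * I) • (((circleMap 0 r θ) ^ 2)⁻¹ • F (p.1 + circleMap 0 r θ) p.2)
    with hg_def
  have hkey : ∀ p ∈ B ×ˢ W, deriv (fun z => F z p.2) p.1
      = (2 * π * I : ℂ)⁻¹ • ∫ θ in (0:ℝ)..(2*π), g p θ := by
    rintro ⟨z, w⟩ ⟨hz, hw⟩
    have h1 : deriv (fun z => F z w) z = Complex.cderiv r (fun z => F z w) z :=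
      (Complex.cderiv_eq_deriv hU (hholo w hw) hr (hBU z hz)).symm
    rw [h1, Complex.cderiv]
    congr 1
    rw [circleIntegral]
    apply intervalIntegral.integral_congr
    intro θ _
    simp only [hg_def, deriv_circleMap, circleMap_sub_center]
    have h2 : circleMap z r θ = z + circleMap 0 r θ := by simp [circleMap]
    rw [h2]
  have hcm_ne : ∀ θ : ℝ, circleMap 0 r θ ≠ 0 := fun θ => by
    simpa using circleMap_ne_center (c := (0:ℂ)) hr.ne' (θ := θ)
  have hφcont : Continuous fun q : (ℂ × ℂ) × ℝ => ((q.1.1 + circleMap 0 r q.2, q.1.2) : ℂ × ℂ) :=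
    (continuous_fst.fst.add ((continuous_circleMap 0 r).comp continuous_snd)).prodMk
      continuous_fst.snd
  have hφmaps : ∀ q : (ℂ × ℂ) × ℝ, q ∈ (B ×ˢ W) ×ˢ (univ : Set ℝ) →
      (q.1.1 + circleMap 0 r q.2, q.1.2) ∈ U ×ˢ W := by
    rintro ⟨⟨z, w⟩, θ⟩ ⟨⟨hz, hw⟩, -⟩
    refine ⟨hBU z hz ?_, hw⟩
    simp [mem_closedBall, dist_eq, norm_circleMap_zero, abs_of_pos hr]
  have hgj : ContinuousOn (fun q : (ℂ × ℂ) × ℝ => g q.1 q.2) ((B ×ˢ W) ×ˢ (univ : Set ℝ)) := by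
    refine ContinuousOn.smul (f := fun q : (ℂ × ℂ) × ℝ => circleMap 0 r q.2 * I)
      (g := fun q : (ℂ × ℂ) × ℝ => ((circleMap 0 r q.2) ^ 2)⁻¹ • F (q.1.1 + circleMap 0 r q.2) q.1.2) ?_ ?_
    · exact (((continuous_circleMap 0 r).comp continuous_snd).mul continuous_const).continuousOn
    · refine ContinuousOn.smul (f := fun q : (ℂ × ℂ) × ℝ => ((circleMap 0 r q.2) ^ 2)⁻¹)
        (g := fun q : (ℂ × ℂ) × ℝ => F (q.1.1 + circleMap 0 r q.2) q.1.2) ?_ ?_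
      · exact ((((continuous_circleMap 0 r).comp continuous_snd).pow 2).inv₀
          (fun q => pow_ne_zero 2 (hcm_ne q.2))).continuousOn
      · exact hcont.comp hφcont.continuousOn hφmaps
  set S : Set (ℂ × ℂ) := B ×ˢ W with hS_def
  have hSopen : IsOpen S := hB.prod hW
  have hinc : Continuous (fun q : S × ℝ => ((↑q.1 : ℂ × ℂ), q.2)) :=
    Continuous.prodMk (continuous_subtype_val.comp continuous_fst) continuous_snd
  have hmaps : ∀ q : S × ℝ, ((↑q.1 : ℂ × ℂ), q.2) ∈ (B ×ˢ W) ×ˢ (univ : Set ℝ) :=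
    fun q => ⟨q.1.2, mem_univ _⟩
  have hunc : Continuous (fun q : S × ℝ => g (↑q.1) q.2) := by
    have := hgj.comp_continuous hinc hmaps
    exact this
  have hsub : Continuous fun x : S => ∫ θ in (0:ℝ)..(2*π), g ↑x θ :=
    intervalIntegral.continuous_parametric_intervalIntegral_of_continuous' (μ := volume)
      (f := fun (x : S) (θ : ℝ) => g ↑x θ) hunc 0 (2*π)
  have hCI : ContinuousOn (fun p : ℂ × ℂ => ∫ θ in (0:ℝ)..(2*π), g p θ) S := by
    rw [continuousOn_iff_continuous_restrict]
    exact hsub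
  exact (hCI.const_smul ((2 * π * I : ℂ)⁻¹)).congr hkey


/-- continuity of the zeroes (counted with multiplicity) of a family of
holomorphic functions depending continuously on a parameter. -/
theorem zeroes_continuous_in_parameter
    (U W : Set ℂ) (hU : IsOpen U) (hW : IsOpen W)
    (F : ℂ → ℂ → ℂ)
    (hcont : ContinuousOn (fun p : ℂ × ℂ => F p.1 p.2) (U ×ˢ W))
    (hholo : ∀ w ∈ W, DifferentiableOn ℂ (fun z => F z w) U)
    (z₀ w₀ : ℂ) (hz₀ : z₀ ∈ U) (hw₀ : w₀ ∈ W)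
    (hnz : ¬ ∀ᶠ z in nhds z₀, F z w₀ = 0)
    (m : ℕ)
    (hm : ∃ u : ℂ → ℂ, AnalyticAt ℂ u z₀ ∧ u z₀ ≠ 0 ∧
      ∀ᶠ z in nhds z₀, F z w₀ = (z - z₀) ^ m * u z) :
    ∀ ε > 0, Metric.closedBall z₀ ε ⊆ U →
      (∀ z ∈ Metric.closedBall z₀ ε, F z w₀ = 0 → z = z₀) →
      ∃ δ > 0, Metric.ball w₀ δ ⊆ W ∧ ∀ w ∈ Metric.ball w₀ δ,
        (∀ z ∈ Metric.sphere z₀ ε, F z w ≠ 0) ∧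
        ∃ Z : Finset ℂ, ∃ ord : ℂ → ℕ,
          (∀ z : ℂ, z ∈ Z ↔ z ∈ Metric.ball z₀ ε ∧ F z w = 0) ∧
          (∀ z ∈ Z, ∃ u : ℂ → ℂ, AnalyticAt ℂ u z ∧ u z ≠ 0 ∧
            ∀ᶠ ζ in nhds z, F ζ w = (ζ - z) ^ (ord z) * u ζ) ∧
          ∑ z ∈ Z, ord z = m := by
  intro ε hε hsub honly
  -- enlarge the closed ball inside U
  obtain ⟨t, ht, htsub⟩ :=
    (isCompact_closedBall z₀ ε).exists_cthickening_subset_open hU hsub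
  rw [cthickening_closedBall ht.le hε.le] at htsub
  set R' : ℝ := t + ε with hR'_def
  have hεR' : ε < R' := by rw [hR'_def]; linarith
  have hballR'U : ball z₀ R' ⊆ U := (ball_subset_closedBall).trans htsub
  -- the band B around the sphere, with uniform radius t/2
  set B : Set ℂ := ball z₀ (ε + t / 2) with hB_def
  have hBU : ∀ z ∈ B, closedBall z (t / 2) ⊆ U := by
    intro z hz
    refine (closedBall_subset_closedBall' ?_).trans htsub
    have := mem_ball.1 hz
    rw [dist_comm] at this ⊢
    linarith
  have hG := aux_deriv_jointly_continuous U W hU hW F hcont hholo B isOpen_ball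
    (t / 2) (by linarith) hBU
  -- uniform nonvanishing near the sphere
  have hO : IsOpen ((U ×ˢ W) ∩ ((fun p : ℂ × ℂ => F p.1 p.2) ⁻¹' {(0:ℂ)}ᶜ)) :=
    hcont.isOpen_inter_preimage (hU.prod hW) isOpen_compl_singleton
  have hsphU : sphere z₀ ε ⊆ U := sphere_subset_closedBall.trans hsub
  have hFw₀sph : ∀ z ∈ sphere z₀ ε, F z w₀ ≠ 0 := by
    intro z hz h0
    have hzz₀ : z = z₀ := honly z (sphere_subset_closedBall hz) h0
    rw [hzz₀] at hz
    simp [mem_sphere, hε.ne'] at hz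
    linarith
  have hsubO : (sphere z₀ ε) ×ˢ ({w₀} : Set ℂ) ⊆
      (U ×ˢ W) ∩ ((fun p : ℂ × ℂ => F p.1 p.2) ⁻¹' {(0:ℂ)}ᶜ) := by
    rintro ⟨z, w⟩ ⟨hz, hw⟩
    rw [mem_singleton_iff] at hw
    subst hw
    exact ⟨⟨hsphU hz, hw₀⟩, hFw₀sph z hz⟩
  obtain ⟨u', v', hu'o, hv'o, hsphu', hw₀v', huv'⟩ :=
    generalized_tube_lemma (isCompact_sphere z₀ ε) isCompact_singleton hO hsubO
  obtain ⟨δ₁, hδ₁, hδ₁v'⟩ := Metric.isOpen_iff.1 hv'o w₀ (hw₀v' rfl)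
  obtain ⟨δ₂, hδ₂, hδ₂W⟩ := Metric.isOpen_iff.1 hW w₀ hw₀
  set δ : ℝ := min δ₁ δ₂ with hδ_def
  have hδpos : 0 < δ := lt_min hδ₁ hδ₂
  have hballW : ball w₀ δ ⊆ W := (ball_subset_ball (min_le_right _ _)).trans hδ₂W
  have hne : ∀ w ∈ ball w₀ δ, ∀ z ∈ sphere z₀ ε, F z w ≠ 0 := by
    intro w hw z hz
    have : (z, w) ∈ u' ×ˢ v' :=
      ⟨hsphu' hz, hδ₁v' (ball_subset_ball (min_le_left _ _) hw)⟩
    exact (huv' this).2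
  -- argument principle at each w
  have hAP : ∀ w ∈ ball w₀ δ,
      ∃ (Z : Finset ℂ) (ord : ℂ → ℕ),
        (∀ z, z ∈ Z ↔ z ∈ ball z₀ ε ∧ F z w = 0) ∧
        (∀ z ∈ Z, ∃ u : ℂ → ℂ, AnalyticAt ℂ u z ∧ u z ≠ 0 ∧
          ∀ᶠ ζ in 𝓝 z, F ζ w = (ζ - z) ^ (ord z) * u ζ) ∧
        (∮ z in C(z₀, ε), deriv (fun z => F z w) z / F z w)
          = (2 * π * I) * (∑ z ∈ Z, (ord z : ℂ)) := by
    intro w hw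
    have hdf : DifferentiableOn ℂ (fun z => F z w) (ball z₀ R') :=
      (hholo w (hballW hw)).mono hballR'U
    have hfin := aux_zeros_finite hε hεR' hdf (hne w hw)
    exact aux_arg_principle z₀ ε R' hε hεR' hfin.toFinset.card (fun z => F z w)
      hdf (hne w hw) hfin le_rfl
  -- continuity of the log-derivative integral in w
  set g2 : ℂ → ℝ → ℂ := fun w θ => (circleMap 0 ε θ * I) •
      (deriv (fun z => F z w) (circleMap z₀ ε θ) / F (circleMap z₀ ε θ) w) with hg2_def
  set J : ℂ → ℂ := fun w => ∮ z in C(z₀, ε), deriv (fun z => F z w) z / F z w with hJ_def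
  have hJ_eq : ∀ w, J w = ∫ θ in (0:ℝ)..(2*π), g2 w θ := by
    intro w
    rw [hJ_def]
    simp only [circleIntegral]
    apply intervalIntegral.integral_congr
    intro θ _
    simp only [hg2_def, deriv_circleMap]
  have hsphereB : ∀ θ : ℝ, circleMap z₀ ε θ ∈ B := by
    intro θ
    rw [hB_def, mem_ball, dist_eq, circleMap_sub_center, norm_circleMap_zero,
      abs_of_pos hε]
    linarith
  have hg2cont : ContinuousOn (fun q : ℂ × ℝ => g2 q.1 q.2)
      ((ball w₀ δ) ×ˢ (univ : Set ℝ)) := by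
    refine ContinuousOn.smul (f := fun q : ℂ × ℝ => circleMap 0 ε q.2 * I)
      (g := fun q : ℂ × ℝ => deriv (fun z => F z q.1) (circleMap z₀ ε q.2) / F (circleMap z₀ ε q.2) q.1) ?_ ?_
    · exact (((continuous_circleMap 0 ε).comp continuous_snd).mul continuous_const).continuousOn
    · refine ContinuousOn.div (f := fun q : ℂ × ℝ => deriv (fun z => F z q.1) (circleMap z₀ ε q.2))
        (g := fun q : ℂ × ℝ => F (circleMap z₀ ε q.2) q.1) ?_ ?_ ?_
      · have hmap : Continuous fun q : ℂ × ℝ => ((circleMap z₀ ε q.2, q.1) : ℂ × ℂ) :=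
          ((continuous_circleMap z₀ ε).comp continuous_snd).prodMk continuous_fst
        refine hG.comp hmap.continuousOn ?_
        rintro ⟨w, θ⟩ ⟨hw, -⟩
        exact ⟨hsphereB θ, hballW hw⟩
      · have hmap : Continuous fun q : ℂ × ℝ => ((circleMap z₀ ε q.2, q.1) : ℂ × ℂ) :=
          ((continuous_circleMap z₀ ε).comp continuous_snd).prodMk continuous_fst
        refine hcont.comp hmap.continuousOn ?_
        rintro ⟨w, θ⟩ ⟨hw, -⟩
        exact ⟨hsphU (circleMap_mem_sphere z₀ hε.le θ), hballW hw⟩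
      · rintro ⟨w, θ⟩ ⟨hw, -⟩
        exact hne w hw _ (circleMap_mem_sphere z₀ hε.le θ)
  have hJcont : ContinuousOn J (ball w₀ δ) := by
    set S' : Set ℂ := ball w₀ δ with hS'_def
    have hinc : Continuous (fun q : S' × ℝ => ((↑q.1 : ℂ), q.2)) :=
      Continuous.prodMk (continuous_subtype_val.comp continuous_fst) continuous_snd
    have hmaps : ∀ q : S' × ℝ,
        ((↑q.1 : ℂ), q.2) ∈ S' ×ˢ (univ : Set ℝ) := fun q => ⟨q.1.2, mem_univ _⟩
    have hunc : Continuous (fun q : S' × ℝ => g2 (↑q.1) q.2) := by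
      have := hg2cont.comp_continuous hinc hmaps
      exact this
    have hsubC : Continuous fun x : S' => ∫ θ in (0:ℝ)..(2*π), g2 ↑x θ :=
      intervalIntegral.continuous_parametric_intervalIntegral_of_continuous' (μ := volume)
        (f := fun (x : S') (θ : ℝ) => g2 ↑x θ) hunc 0 (2*π)
    have hCI : ContinuousOn (fun w : ℂ => ∫ θ in (0:ℝ)..(2*π), g2 w θ) S' := by
      rw [continuousOn_iff_continuous_restrict]
      exact hsubC
    exact hCI.congr fun w _ => hJ_eq w
  -- the counting function
  set N : ℂ → ℝ := fun w => ((2 * π * I : ℂ)⁻¹ * J w).re with hN_def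
  have hNcont : ContinuousOn N (ball w₀ δ) :=
    Complex.continuous_re.comp_continuousOn (continuousOn_const.mul hJcont)
  have h2πI : (2 * π * I : ℂ) ≠ 0 := by
    simp [Real.pi_ne_zero, I_ne_zero]
  -- N w equals the number of zeros with multiplicity
  have hNval : ∀ w ∈ ball w₀ δ, ∀ (Z : Finset ℂ) (ord : ℂ → ℕ),
      J w = (2 * π * I) * (∑ z ∈ Z, (ord z : ℂ)) → N w = (∑ z ∈ Z, ord z : ℕ) := by
    intro w _ Z ord hJw
    rw [hN_def]
    simp only
    rw [hJw, inv_mul_cancel_left₀ h2πI]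
    push_cast
    simp
  have hw₀mem : w₀ ∈ ball w₀ δ := mem_ball_self hδpos
  obtain ⟨u, hu_an, hu_ne, hu_ev⟩ := hm
  have haF : AnalyticAt ℂ (fun z => F z w₀) z₀ :=
    ((hholo w₀ hw₀).analyticOnNhd hU) z₀ hz₀
  have hNw₀ : N w₀ = (m : ℝ) := by
    obtain ⟨Z₀, ord₀, hiff₀, hfact₀, hint₀⟩ := hAP w₀ hw₀mem
    have hNw := hNval w₀ hw₀mem Z₀ ord₀ hint₀
    rw [hNw]
    norm_cast
    by_cases hm0 : m = 0
    · subst hm0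
      have hF0 : F z₀ w₀ ≠ 0 := by
        have h1 : F z₀ w₀ = (z₀ - z₀) ^ 0 * u z₀ := hu_ev.self_of_nhds
        simp only [pow_zero, one_mul] at h1
        rw [h1]
        exact hu_ne
      have hZ₀ : Z₀ = ∅ := by
        rw [Finset.eq_empty_iff_forall_notMem]
        intro z hz
        obtain ⟨hzb, hzf⟩ := (hiff₀ z).1 hz
        have := honly z (ball_subset_closedBall hzb) hzf
        rw [this] at hzf
        exact hF0 hzf
      simp [hZ₀]
    · have hF0 : F z₀ w₀ = 0 := by
        have h1 : F z₀ w₀ = (z₀ - z₀) ^ m * u z₀ := hu_ev.self_of_nhds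
        rw [h1, sub_self, zero_pow hm0, zero_mul]
      have hz₀Z : z₀ ∈ Z₀ := (hiff₀ z₀).2 ⟨mem_ball_self hε, hF0⟩
      have hZ₀ : Z₀ = {z₀} := by
        apply Finset.eq_singleton_iff_unique_mem.2
        refine ⟨hz₀Z, fun z hz => ?_⟩
        obtain ⟨hzb, hzf⟩ := (hiff₀ z).1 hz
        exact honly z (ball_subset_closedBall hzb) hzf
      rw [hZ₀, Finset.sum_singleton]
      obtain ⟨v, hv_an, hv_ne, hv_ev⟩ := hfact₀ z₀ hz₀Z
      have h1 : analyticOrderAt (fun z => F z w₀) z₀ = ((ord₀ z₀ : ℕ) : ℕ∞) :=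
        haF.analyticOrderAt_eq_natCast.2 ⟨v, hv_an, hv_ne, by simpa [smul_eq_mul] using hv_ev⟩
      have h2 : analyticOrderAt (fun z => F z w₀) z₀ = ((m : ℕ) : ℕ∞) :=
        haF.analyticOrderAt_eq_natCast.2 ⟨u, hu_an, hu_ne, by simpa [smul_eq_mul] using hu_ev⟩
      have := h1.symm.trans h2
      exact_mod_cast this
  have hpre : IsPreconnected (N '' ball w₀ δ) :=
    ((convex_ball w₀ δ).isPreconnected).image N hNcont
  have hord := hpre.ordConnected
  have key : ∀ x y : ℕ, (x : ℝ) ∈ N '' ball w₀ δ → (y : ℝ) ∈ N '' ball w₀ δ →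
      x < y → False := by
    intro x y hx hy hxy
    have hx1y : (x : ℝ) + 1 ≤ (y : ℝ) := by exact_mod_cast hxy
    have hmid : (x : ℝ) + 1/2 ∈ Set.Icc (x : ℝ) (y : ℝ) :=
      ⟨by linarith, by linarith⟩
    obtain ⟨w', hw', hw'val⟩ := hord.out hx hy hmid
    obtain ⟨Z', ord', hiff', hfact', hint'⟩ := hAP w' hw'
    have hNw' : N w' = ((∑ z ∈ Z', ord' z : ℕ) : ℝ) := hNval w' hw' Z' ord' hint'
    rw [hw'val] at hNw'
    have h2 : (2 * (∑ z ∈ Z', ord' z) : ℝ) = 2 * x + 1 := by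
      push_cast at hNw' ⊢
      linarith
    have h3 : (2 * (∑ z ∈ Z', ord' z) : ℕ) = 2 * x + 1 := by exact_mod_cast h2
    omega
  have hconst : ∀ w ∈ ball w₀ δ, N w = (m : ℝ) := by
    intro w hw
    obtain ⟨Z, ord, hiff, hfact, hint⟩ := hAP w hw
    have hNw : N w = ((∑ z ∈ Z, ord z : ℕ) : ℝ) := hNval w hw Z ord hint
    set k₁ : ℕ := ∑ z ∈ Z, ord z with hk₁
    have hmem₁ : ((k₁ : ℕ) : ℝ) ∈ N '' ball w₀ δ := ⟨w, hw, hNw⟩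
    have hmem₂ : ((m : ℕ) : ℝ) ∈ N '' ball w₀ δ := ⟨w₀, hw₀mem, hNw₀⟩
    rcases lt_trichotomy k₁ m with h | h | h
    · exact absurd (key k₁ m hmem₁ hmem₂ h) id
    · rw [hNw, h]
    · exact absurd (key m k₁ hmem₂ hmem₁ h) id
  refine ⟨δ, hδpos, hballW, ?_⟩
  intro w hw
  refine ⟨fun z hz => hne w hw z hz, ?_⟩
  obtain ⟨Z, ord, hiff, hfact, hint⟩ := hAP w hw
  refine ⟨Z, ord, hiff, hfact, ?_⟩
  have hNw : N w = ((∑ z ∈ Z, ord z : ℕ) : ℝ) := hNval w hw Z ord hint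
  have hc := hconst w hw
  rw [hNw] at hc
  exact_mod_cast hc
end
end
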